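/- arXiv:2012.00804 — 6 statements merged into one kernel-verified Lean document; each statement's English description precedes it below -/
import Mathlib

section
/- Let f(E,n) = −E + 2(3/2 − n^M)(E² − E³/4) with M ≥ 1 a fixed integer. If 0 < E < 4, n ≥ 0 and f(E,n) = 0, then ∂f/∂E(E,n) = (1 − E/2)/(1 − E/4). In particular, on the nontrivial branch of the critical manifold, ∂f/∂E is positive for 0 < E < 2 (repelling middle branch), negative for 2 < E < 4 (attracting right branch), and vanishes exactly at E = 2, in which case n^M = 1; so for n ≥ 0 the unique point of this branch where normal hyperbolicity fails is p_F = (2, 1). -/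
/-!
Write `c = 2 (3/2 - n^M)`, so `f(E,n) = -E + c (E² - E³/4)`. Off `E = 0`, the equation `f = 0`
reads `c E (1 - E/4) = 1`; substituting this into `∂f/∂E = -1 + c (2E - 3E²/4)` eliminates `c`
and leaves `(1 - E/2)/(1 - E/4)`, whose sign on `0 < E < 4` is that of `2 - E`. At `E = 2` the
branch equation gives `c = 1`, i.e. `n^M = 1`, and `n = 1` for `n ≥ 0`.
-/

section KarmaCubic

variable {c E : ℝ}

theorem hasDerivAt_karmaCubic (c E : ℝ) :
    HasDerivAt (fun E' : ℝ => -E' + c * (E' ^ 2 - E' ^ 3 / 4))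
      (-1 + c * (2 * E - 3 * E ^ 2 / 4)) E := by
  have h2 : HasDerivAt (fun E' : ℝ => E' ^ 2) (2 * E) E := by
    simpa using hasDerivAt_pow 2 E
  have h3 : HasDerivAt (fun E' : ℝ => E' ^ 3) (3 * E ^ 2) E := by
    simpa using hasDerivAt_pow 3 E
  exact (hasDerivAt_id E).neg.add ((h2.sub (h3.div_const 4)).const_mul c)

theorem karmaCubic_branch_eq (hE : E ≠ 0) (hz : -E + c * (E ^ 2 - E ^ 3 / 4) = 0) :
    c * E * (1 - E / 4) = 1 := by
  have h : E * (c * E * (1 - E / 4) - 1) = 0 := by linear_combination hz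
  linarith [(mul_eq_zero.mp h).resolve_left hE]

theorem karmaCubic_deriv_eq_of_branch (hE : E ≠ 4) (hbranch : c * E * (1 - E / 4) = 1) :
    -1 + c * (2 * E - 3 * E ^ 2 / 4) = (1 - E / 2) / (1 - E / 4) := by
  have h4 : (1 : ℝ) - E / 4 ≠ 0 := fun h => hE (by linarith)
  rw [eq_div_iff h4]
  linear_combination (2 - 3 * E / 4) * hbranch

end KarmaCubic

section BranchSlope

variable {E : ℝ}

theorem branchSlope_pos (hE : E < 2) : 0 < (1 - E / 2) / (1 - E / 4) :=
  div_pos (by linarith) (by linarith)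

theorem branchSlope_neg (hE2 : 2 < E) (hE4 : E < 4) : (1 - E / 2) / (1 - E / 4) < 0 :=
  div_neg_of_neg_of_pos (by linarith) (by linarith)

theorem branchSlope_eq_zero_iff (hE : E < 4) : (1 - E / 2) / (1 - E / 4) = 0 ↔ E = 2 := by
  rw [div_eq_zero_iff, or_iff_left (by linarith : (1 : ℝ) - E / 4 ≠ 0)]
  constructor <;> intro h <;> linarith

end BranchSlope

/-- On the nontrivial branch of the Karma critical manifold (`f(E,n) = 0`,
`0 < E < 4`, `n ≥ 0`), one has `∂f/∂E = (1 - E/2)/(1 - E/4)`: positive for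
`0 < E < 2` (repelling), negative for `2 < E < 4` (attracting), vanishing
exactly at `E = 2`, where moreover `n^M = 1` and hence `n = 1`; so the unique
non-normally-hyperbolic point of this branch is `p_F = (2,1)`. -/
theorem karma_branch_hyperbolicity (M : ℕ) (hM : 1 ≤ M) (f : ℝ → ℝ → ℝ)
    (hf : ∀ E n, f E n = -E + 2 * (3 / 2 - n ^ M) * (E ^ 2 - E ^ 3 / 4)) :
    ∀ E n : ℝ, 0 < E → E < 4 → 0 ≤ n → f E n = 0 →
      HasDerivAt (fun E' => f E' n) ((1 - E / 2) / (1 - E / 4)) E ∧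
      (E < 2 → 0 < (1 - E / 2) / (1 - E / 4)) ∧
      (2 < E → (1 - E / 2) / (1 - E / 4) < 0) ∧
      ((1 - E / 2) / (1 - E / 4) = 0 ↔ E = 2) ∧
      (E = 2 → n ^ M = 1 ∧ n = 1) := by
  intro E n hE0 hE4 hn hfz
  have hbranch := karmaCubic_branch_eq hE0.ne' (hf E n ▸ hfz)
  refine ⟨?_, branchSlope_pos, (branchSlope_neg · hE4), branchSlope_eq_zero_iff hE4, ?_⟩
  · rw [← karmaCubic_deriv_eq_of_branch hE4.ne hbranch, funext (hf · n)]
    exact hasDerivAt_karmaCubic _ E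
  · rintro rfl
    have hnM : n ^ M = 1 := by linarith
    exact ⟨hnM, (pow_eq_one_iff_of_nonneg hn (by omega)).mp hnM⟩
end

section
/- Consider the Karma ODE with I = 0, parameters ε > 0, 0 < n_B < 1 and integer M ≥ 1. The equilibria lying on the E-axis (n = 0) are exactly (0,0) and (E_s, 0), where E_s = 2 − (2/3)√6 is the unique root in (0,1) of −1 + 3E − (3/4)E² = 0. Moreover ∂f/∂E(0,0) = −1 < 0 and ∂f/∂E(E_s,0) = −1 + 3(2E_s − (3/4)E_s²) > 0; since for E < 1 the slow equation reduces to n' = −εn, for every ε > 0 the Jacobian at (0,0) has eigenvalues −1 and −ε (a stable node) and the Jacobian at (E_s,0) has one positive and one negative eigenvalue (a saddle). -/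
/-!
Along `n = 0` the reaction factors as `f(E,0) = E·(-1 + 3E - (3/4)E²)`, and the slow equation
forces `E ≤ 1`; the quadratic has roots `2 ± (2/3)√6`, of which only `2 - (2/3)√6` lies below `1`.
Since `E_s` solves the quadratic, `∂f/∂E(E_s,0)` simplifies to `2 - 3E_s > 0`. Both Jacobians are
upper triangular, so their eigenvalues are their diagonal entries.
-/

theorem Matrix.IsUpperTriangular.hasEigenvalue_toLin' {n R : Type*} [Fintype n] [DecidableEq n]
    [LinearOrder n] [CommRing R] [IsDomain R] {A : Matrix n n R} (hA : A.IsUpperTriangular)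
    (i : n) : Module.End.HasEigenvalue (Matrix.toLin' A) (A i i) := by
  rw [Module.End.hasEigenvalue_iff_isRoot_charpoly, Matrix.charpoly_toLin',
    A.charpoly_of_isUpperTriangular hA, Polynomial.IsRoot, Polynomial.eval_prod]
  exact Finset.prod_eq_zero (Finset.mem_univ i) (by simp)

theorem Matrix.hasEigenvalue_toLin'_of_fin_two_upper {R : Type*} [CommRing R] [IsDomain R]
    (a b d : R) :
    Module.End.HasEigenvalue (Matrix.toLin' !![a, b; 0, d]) a ∧
      Module.End.HasEigenvalue (Matrix.toLin' !![a, b; 0, d]) d := by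
  have hA : (!![a, b; 0, d]).IsUpperTriangular := by
    intro i j hij
    fin_cases i <;> fin_cases j <;> simp_all
  exact ⟨hA.hasEigenvalue_toLin' 0, hA.hasEigenvalue_toLin' 1⟩

namespace Karma

noncomputable def reaction (M : ℕ) (E n : ℝ) : ℝ := -E + 2 * (3 / 2 - n ^ M) * (E ^ 2 - E ^ 3 / 4)

theorem hasDerivAt_reaction (M : ℕ) (E n : ℝ) :
    HasDerivAt (reaction M · n) (-1 + 2 * (3 / 2 - n ^ M) * (2 * E - 3 / 4 * E ^ 2)) E := by
  have h : HasDerivAt (reaction M · n) _ E := (hasDerivAt_id' E).neg.add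
    (((hasDerivAt_pow 2 E).sub ((hasDerivAt_pow 3 E).div_const 4)).const_mul (2 * (3 / 2 - n ^ M)))
  convert h using 1
  push_cast
  ring

variable {M : ℕ}

theorem reaction_zero_right (hM : M ≠ 0) (E : ℝ) :
    reaction M E 0 = E * (-1 + 3 * E - 3 / 4 * E ^ 2) := by
  rw [reaction, zero_pow hM]; ring

theorem hasDerivAt_reaction_zero_right (hM : M ≠ 0) (E : ℝ) :
    HasDerivAt (reaction M · 0) (-1 + 3 * (2 * E - 3 / 4 * E ^ 2)) E := by
  convert hasDerivAt_reaction M E 0 using 1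
  rw [zero_pow hM]; ring

noncomputable def saddleE : ℝ := 2 - 2 / 3 * √6

theorem two_lt_sqrt_six : 2 < √6 := by
  rw [show (2 : ℝ) = √(2 ^ 2) by simp]
  exact Real.sqrt_lt_sqrt (by norm_num) (by norm_num)

theorem sqrt_six_lt_three : √6 < 3 := by
  rw [show (3 : ℝ) = √(3 ^ 2) by simp]
  exact Real.sqrt_lt_sqrt (by norm_num) (by norm_num)

theorem saddleE_pos : 0 < saddleE := by
  unfold saddleE; linarith [sqrt_six_lt_three]

theorem saddleE_lt_one : saddleE < 1 := by
  unfold saddleE; linarith [two_lt_sqrt_six]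

theorem quadratic_eq_zero_iff {E : ℝ} :
    -1 + 3 * E - 3 / 4 * E ^ 2 = 0 ↔ E = saddleE ∨ E = 2 + 2 / 3 * √6 := by
  have hsq : √6 ^ 2 = 6 := Real.sq_sqrt (by norm_num)
  have hfactor :
      -1 + 3 * E - 3 / 4 * E ^ 2 = -3 / 4 * ((E - saddleE) * (E - (2 + 2 / 3 * √6))) := by
    unfold saddleE; linear_combination (-1 / 3 : ℝ) * hsq
  rw [hfactor, mul_eq_zero, mul_eq_zero, sub_eq_zero, sub_eq_zero]
  norm_num

theorem saddleE_isRoot : -1 + 3 * saddleE - 3 / 4 * saddleE ^ 2 = 0 :=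
  quadratic_eq_zero_iff.mpr (Or.inl rfl)

theorem eq_saddleE_of_le_one {E : ℝ} (hE : E ≤ 1) (hroot : -1 + 3 * E - 3 / 4 * E ^ 2 = 0) :
    E = saddleE := by
  refine (quadratic_eq_zero_iff.mp hroot).resolve_right fun h => ?_
  have : 0 ≤ √6 := Real.sqrt_nonneg 6
  linarith

theorem deriv_reaction_saddleE_pos : 0 < -1 + 3 * (2 * saddleE - 3 / 4 * saddleE ^ 2) :=
  calc 0 < 2 - 3 * saddleE := by unfold saddleE; linarith [two_lt_sqrt_six]
    _ = -1 + 3 * (2 * saddleE - 3 / 4 * saddleE ^ 2) := by linear_combination -3 * saddleE_isRoot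

theorem setOf_axis_equilibrium_eq (hM : M ≠ 0) {nB : ℝ} (hnB : 0 < nB) :
    {E : ℝ | reaction M E 0 = 0 ∧ 1 / nB * max (E - 1) 0 - 0 = 0} = {0, saddleE} := by
  ext E
  simp only [Set.mem_ofPred_eq, Set.mem_insert_iff, Set.mem_singleton_iff, reaction_zero_right hM,
    sub_zero, mul_eq_zero, one_div, inv_eq_zero, hnB.ne', false_or, max_eq_right_iff, sub_nonpos]
  constructor
  · rintro ⟨hE0 | hroot, hE1⟩
    exacts [Or.inl hE0, Or.inr (eq_saddleE_of_le_one hE1 hroot)]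
  · rintro (rfl | rfl)
    exacts [⟨Or.inl rfl, zero_le_one⟩, ⟨Or.inr saddleE_isRoot, saddleE_lt_one.le⟩]

end Karma

open Karma

theorem karma_E_axis_equilibria_general (M : ℕ) (hM : 1 ≤ M) (nB : ℝ)
    (hnB0 : 0 < nB) (f : ℝ → ℝ → ℝ)
    (hf : ∀ E n, f E n = -E + 2 * (3 / 2 - n ^ M) * (E ^ 2 - E ^ 3 / 4))
    (Es : ℝ) (hEs : Es = 2 - (2 / 3) * Real.sqrt 6) :
    -- E-axis equilibria are exactly (0,0) and (Es,0)
    ({E : ℝ | f E 0 = 0 ∧ (1 / nB) * max (E - 1) 0 - 0 = 0} = {0, Es}) ∧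
    -- Es is the unique root in (0,1) of -1 + 3E - (3/4)E² = 0
    (0 < Es ∧ Es < 1 ∧ -1 + 3 * Es - (3 / 4) * Es ^ 2 = 0) ∧
    (∀ E : ℝ, 0 < E → E < 1 → -1 + 3 * E - (3 / 4) * E ^ 2 = 0 → E = Es) ∧
    -- the fast-variable partial derivative along n = 0 and its signs
    (∀ E : ℝ, HasDerivAt (fun E' => f E' 0)
      (-1 + 3 * (2 * E - (3 / 4) * E ^ 2)) E) ∧
    ((-1 + 3 * (2 * (0:ℝ) - (3 / 4) * (0:ℝ) ^ 2)) < 0) ∧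
    (0 < -1 + 3 * (2 * Es - (3 / 4) * Es ^ 2)) ∧
    -- eigenvalues of the Jacobians (triangular matrices)
    (∀ ε : ℝ, 0 < ε →
      Module.End.HasEigenvalue
        (Matrix.toLin' (!![(-1 : ℝ), 0; 0, -ε])) (-1) ∧
      Module.End.HasEigenvalue
        (Matrix.toLin' (!![(-1 : ℝ), 0; 0, -ε])) (-ε) ∧
      Module.End.HasEigenvalue
        (Matrix.toLin'
          (!![(-1 + 3 * (2 * Es - (3 / 4) * Es ^ 2) : ℝ),
              -2 * (M : ℝ) * (0 : ℝ) ^ (M - 1) * (Es ^ 2 - Es ^ 3 / 4);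
              0, -ε]))
        (-1 + 3 * (2 * Es - (3 / 4) * Es ^ 2)) ∧
      Module.End.HasEigenvalue
        (Matrix.toLin'
          (!![(-1 + 3 * (2 * Es - (3 / 4) * Es ^ 2) : ℝ),
              -2 * (M : ℝ) * (0 : ℝ) ^ (M - 1) * (Es ^ 2 - Es ^ 3 / 4);
              0, -ε]))
        (-ε) ∧
      0 < -1 + 3 * (2 * Es - (3 / 4) * Es ^ 2) ∧ -ε < 0) := by
  obtain rfl : f = reaction M := funext₂ hf
  obtain rfl : Es = saddleE := hEs
  have hM0 : M ≠ 0 := Nat.one_le_iff_ne_zero.mp hM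
  refine ⟨setOf_axis_equilibrium_eq hM0 hnB0, ⟨saddleE_pos, saddleE_lt_one, saddleE_isRoot⟩,
    fun E _ hE1 hroot => eq_saddleE_of_le_one hE1.le hroot, hasDerivAt_reaction_zero_right hM0,
    by norm_num, deriv_reaction_saddleE_pos, fun ε hε => ?_⟩
  exact ⟨(Matrix.hasEigenvalue_toLin'_of_fin_two_upper _ _ _).1,
    (Matrix.hasEigenvalue_toLin'_of_fin_two_upper _ _ _).2,
    (Matrix.hasEigenvalue_toLin'_of_fin_two_upper _ _ _).1,
    (Matrix.hasEigenvalue_toLin'_of_fin_two_upper _ _ _).2,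
    deriv_reaction_saddleE_pos, neg_neg_of_pos hε⟩

/-- For the Karma ODE with `I = 0` (`ε > 0`, `0 < n_B < 1`, `M ≥ 1`): the
equilibria on the `E`-axis are exactly `(0,0)` and `(E_s,0)` with
`E_s = 2 - (2/3)√6`, the unique root in `(0,1)` of `-1 + 3E - (3/4)E² = 0`;
`∂f/∂E(E,0) = -1 + 3(2E - (3/4)E²)` is negative at `0` and positive at `E_s`;
and since the slow equation reduces to `n' = -εn` for `E < 1`, the Jacobian at
`(0,0)` has eigenvalues `-1` and `-ε` (a stable node), while the Jacobian at
`(E_s,0)` has eigenvalues `-1 + 3(2E_s - (3/4)E_s²) > 0` and `-ε < 0`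
(a saddle). -/
theorem karma_E_axis_equilibria (M : ℕ) (hM : 1 ≤ M) (nB : ℝ)
    (hnB0 : 0 < nB) (hnB1 : nB < 1) (f : ℝ → ℝ → ℝ)
    (hf : ∀ E n, f E n = -E + 2 * (3 / 2 - n ^ M) * (E ^ 2 - E ^ 3 / 4))
    (Es : ℝ) (hEs : Es = 2 - (2 / 3) * Real.sqrt 6) :
    -- E-axis equilibria are exactly (0,0) and (Es,0)
    ({E : ℝ | f E 0 = 0 ∧ (1 / nB) * max (E - 1) 0 - 0 = 0} = {0, Es}) ∧
    -- Es is the unique root in (0,1) of -1 + 3E - (3/4)E² = 0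
    (0 < Es ∧ Es < 1 ∧ -1 + 3 * Es - (3 / 4) * Es ^ 2 = 0) ∧
    (∀ E : ℝ, 0 < E → E < 1 → -1 + 3 * E - (3 / 4) * E ^ 2 = 0 → E = Es) ∧
    -- the fast-variable partial derivative along n = 0 and its signs
    (∀ E : ℝ, HasDerivAt (fun E' => f E' 0)
      (-1 + 3 * (2 * E - (3 / 4) * E ^ 2)) E) ∧
    ((-1 + 3 * (2 * (0:ℝ) - (3 / 4) * (0:ℝ) ^ 2)) < 0) ∧
    (0 < -1 + 3 * (2 * Es - (3 / 4) * Es ^ 2)) ∧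
    -- eigenvalues of the Jacobians (triangular matrices)
    (∀ ε : ℝ, 0 < ε →
      Module.End.HasEigenvalue
        (Matrix.toLin' (!![(-1 : ℝ), 0; 0, -ε])) (-1) ∧
      Module.End.HasEigenvalue
        (Matrix.toLin' (!![(-1 : ℝ), 0; 0, -ε])) (-ε) ∧
      Module.End.HasEigenvalue
        (Matrix.toLin'
          (!![(-1 + 3 * (2 * Es - (3 / 4) * Es ^ 2) : ℝ),
              -2 * (M : ℝ) * (0 : ℝ) ^ (M - 1) * (Es ^ 2 - Es ^ 3 / 4);
              0, -ε]))
        (-1 + 3 * (2 * Es - (3 / 4) * Es ^ 2)) ∧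
      Module.End.HasEigenvalue
        (Matrix.toLin'
          (!![(-1 + 3 * (2 * Es - (3 / 4) * Es ^ 2) : ℝ),
              -2 * (M : ℝ) * (0 : ℝ) ^ (M - 1) * (Es ^ 2 - Es ^ 3 / 4);
              0, -ε]))
        (-ε) ∧
      0 < -1 + 3 * (2 * Es - (3 / 4) * Es ^ 2) ∧ -ε < 0) :=
  karma_E_axis_equilibria_general M hM nB hnB0 f hf Es hEs
end

section
/- Let g(E) = E − 3E² + (3/4)E³, let E_c = (4 − 2√3)/3 and I₀ = g(E_c). Then 0 < E_c < 1, g'(E_c) = 0, and g attains its maximum on [0,1] exactly at E_c. Consequently: for 0 < I < I₀ the equation g(E) = I has exactly two solutions in (0,1); for I = I₀ it has exactly one solution in (0,1], namely the double root E_c; and for I > I₀ it has no solution in [0,1]. (Since the Karma equilibria on the segment {n = 0, 0 ≤ E ≤ 1} are exactly the solutions of g(E) = I, the two E-axis equilibria collide in a saddle-node at I = I₀ ≈ 0.08718 and disappear for I > I₀.) -/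
open Real Set

/-!
Both the derivative and the gap to the critical value factor explicitly:
`g'(E) = 9/4 (E - E_c)(E - (4 + 2√3)/3)` and
`g(E) - g(E_c) = 3/4 (E - E_c)² (E - (4 + 4√3)/3)`, and the second roots exceed `1`.
Hence on `[0, 1]` the function `g` increases up to `E_c`, decreases after it and has its strict
maximum there. Since `g 0 = 0` and `g 1 = -5/4`, every level `0 < I < I₀` is crossed exactly
once on each side of `E_c`.
-/

theorem setOf_mem_Ioo_eq_pair_of_strictMonoOn_of_strictAntiOn {f : ℝ → ℝ} {a b c y : ℝ}
    (hac : a ≤ c) (hcb : c ≤ b) (hf : ContinuousOn f (Icc a b))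
    (hmono : StrictMonoOn f (Icc a c)) (hanti : StrictAntiOn f (Icc c b))
    (ha : f a < y) (hb : f b < y) (hc : y < f c) :
    ∃ x₁ x₂, x₁ ≠ x₂ ∧ {x | x ∈ Ioo a b ∧ f x = y} = {x₁, x₂} := by
  obtain ⟨x₁, hx₁, hfx₁⟩ :=
    intermediate_value_Ioo hac (hf.mono (Icc_subset_Icc_right hcb)) ⟨ha, hc⟩
  obtain ⟨x₂, hx₂, hfx₂⟩ :=
    intermediate_value_Ioo' hcb (hf.mono (Icc_subset_Icc_left hac)) ⟨hb, hc⟩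
  refine ⟨x₁, x₂, (hx₁.2.trans hx₂.1).ne, ?_⟩
  ext x
  simp only [mem_ofPred_eq, mem_insert_iff, mem_singleton_iff]
  constructor
  · rintro ⟨hx, hfx⟩
    have hxc : x ≠ c := by rintro rfl; exact hc.ne' hfx
    rcases hxc.lt_or_gt with hlt | hgt
    · exact .inl <| hmono.injOn ⟨hx.1.le, hlt.le⟩ (Ioo_subset_Icc_self hx₁) (hfx.trans hfx₁.symm)
    · exact .inr <| hanti.injOn ⟨hgt.le, hx.2.le⟩ (Ioo_subset_Icc_self hx₂) (hfx.trans hfx₂.symm)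
  · rintro (rfl | rfl)
    · exact ⟨⟨hx₁.1, hx₁.2.trans_le hcb⟩, hfx₁⟩
    · exact ⟨⟨hac.trans_lt hx₂.1, hx₂.2⟩, hfx₂⟩

namespace Karma

noncomputable def g (E : ℝ) : ℝ := E - 3 * E ^ 2 + (3 / 4) * E ^ 3

noncomputable def Ec : ℝ := (4 - 2 * √3) / 3

lemma sqrt_three_mem_Ioo : √3 ∈ Ioo (1.7 : ℝ) 1.8 := by
  constructor <;> nlinarith [Real.sq_sqrt (show (0 : ℝ) ≤ 3 by norm_num), Real.sqrt_nonneg 3]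

lemma Ec_mem_Ioo : Ec ∈ Ioo (0 : ℝ) 1 := by
  have := sqrt_three_mem_Ioo
  constructor <;> unfold Ec <;> linarith [this.1, this.2]

lemma continuous_g : Continuous g := by
  unfold g; fun_prop

lemma hasDerivAt_g (x : ℝ) : HasDerivAt g (9 / 4 * (x - Ec) * (x - (4 + 2 * √3) / 3)) x := by
  have h := ((hasDerivAt_id x).sub ((hasDerivAt_pow 2 x).const_mul 3)).add
    ((hasDerivAt_pow 3 x).const_mul (3 / 4))
  refine h.congr_deriv ?_
  simp only [Nat.cast_ofNat, Ec]
  linear_combination Real.sq_sqrt (show (0 : ℝ) ≤ 3 by norm_num)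

lemma hasDerivAt_g_Ec : HasDerivAt g 0 Ec := by
  simpa using hasDerivAt_g Ec

lemma g_sub_g_Ec (E : ℝ) : g E - g Ec = 3 / 4 * (E - Ec) ^ 2 * (E - (4 + 4 * √3) / 3) := by
  unfold g Ec
  linear_combination (2 / 3 * √3 + E - 4 / 3) * Real.sq_sqrt (show (0 : ℝ) ≤ 3 by norm_num)

lemma g_lt_g_Ec {E : ℝ} (hE : E ≤ 1) (hne : E ≠ Ec) : g E < g Ec := by
  have hsq : 0 < (E - Ec) ^ 2 := by positivity [sub_ne_zero.mpr hne]
  have hfar : E - (4 + 4 * √3) / 3 < 0 := by linarith [sqrt_three_mem_Ioo.1]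
  nlinarith [g_sub_g_Ec E]

lemma g_le_g_Ec {E : ℝ} (hE : E ≤ 1) : g E ≤ g Ec := by
  rcases eq_or_ne E Ec with rfl | hne
  · exact le_rfl
  · exact (g_lt_g_Ec hE hne).le

lemma strictMonoOn_g : StrictMonoOn g (Iic Ec) := by
  refine strictMonoOn_of_deriv_pos (convex_Iic _) continuous_g.continuousOn fun x hx => ?_
  rw [interior_Iic] at hx
  rw [(hasDerivAt_g x).deriv]
  have : x - (4 + 2 * √3) / 3 < 0 := by
    linarith [mem_Iio.mp hx, Ec_mem_Ioo.2, sqrt_three_mem_Ioo.1]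
  nlinarith [mem_Iio.mp hx]

lemma strictAntiOn_g : StrictAntiOn g (Icc Ec 1) := by
  refine strictAntiOn_of_deriv_neg (convex_Icc _ _) continuous_g.continuousOn fun x hx => ?_
  rw [interior_Icc] at hx
  rw [(hasDerivAt_g x).deriv]
  have : x - (4 + 2 * √3) / 3 < 0 := by linarith [hx.2, sqrt_three_mem_Ioo.1]
  nlinarith [hx.1]

end Karma

/-- Saddle-node of the Karma `E`-axis equilibria: with
`g(E) = E - 3E² + (3/4)E³`, `E_c = (4 - 2√3)/3` and `I₀ = g(E_c)`, one has
`0 < E_c < 1`, `g'(E_c) = 0`, `g` attains its maximum on `[0,1]` exactly at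
`E_c`; for `0 < I < I₀` the equation `g(E) = I` has exactly two solutions in
`(0,1)`, for `I = I₀` exactly one solution in `(0,1]` (namely `E_c`), and for
`I > I₀` no solution in `[0,1]`. -/
theorem karma_saddle_node (g : ℝ → ℝ)
    (hg : ∀ E, g E = E - 3 * E ^ 2 + (3 / 4) * E ^ 3)
    (Ec I₀ : ℝ) (hEc : Ec = (4 - 2 * Real.sqrt 3) / 3) (hI₀ : I₀ = g Ec) :
    (0 < Ec ∧ Ec < 1) ∧
    HasDerivAt g 0 Ec ∧
    (∀ E ∈ Icc (0:ℝ) 1, g E ≤ g Ec) ∧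
    (∀ E ∈ Icc (0:ℝ) 1, E ≠ Ec → g E < g Ec) ∧
    (∀ I : ℝ, 0 < I → I < I₀ →
      ∃ E₁ E₂ : ℝ, E₁ ≠ E₂ ∧ {E : ℝ | E ∈ Ioo (0:ℝ) 1 ∧ g E = I} = {E₁, E₂}) ∧
    ({E : ℝ | E ∈ Ioc (0:ℝ) 1 ∧ g E = I₀} = {Ec}) ∧
    (∀ I : ℝ, I₀ < I → ∀ E ∈ Icc (0:ℝ) 1, g E ≠ I) := by
  obtain rfl : g = Karma.g := funext hg
  obtain rfl : Ec = Karma.Ec := hEc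
  subst hI₀
  obtain ⟨hEc₀, hEc₁⟩ := Karma.Ec_mem_Ioo
  refine ⟨⟨hEc₀, hEc₁⟩, Karma.hasDerivAt_g_Ec, fun E hE => Karma.g_le_g_Ec hE.2,
    fun E hE => Karma.g_lt_g_Ec hE.2, fun I hI hI₀ => ?_, ?_, fun I hI E hE hgE => ?_⟩
  · refine setOf_mem_Ioo_eq_pair_of_strictMonoOn_of_strictAntiOn hEc₀.le hEc₁.le
      Karma.continuous_g.continuousOn (Karma.strictMonoOn_g.mono fun _ h => h.2)
      Karma.strictAntiOn_g ?_ ?_ hI₀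
    · simpa [Karma.g] using hI
    · norm_num [Karma.g]
      linarith
  · ext E
    refine ⟨fun ⟨hE, hgE⟩ => ?_, ?_⟩
    · by_contra hne
      exact (Karma.g_lt_g_Ec hE.2 hne).ne hgE
    · rintro rfl
      exact ⟨⟨hEc₀, hEc₁.le⟩, rfl⟩
  · exact (Karma.g_le_g_Ec hE.2).not_gt (hgE ▸ hI)
end

section
/- Fix D > 0 and an integer M ≥ 1, and suppose n^M = 15/16, so a = 3/2 − n^M = 9/16. Then s = √(1 − 1/(2a)) = 1/3, the outer equilibrium of the travelling-wave fast subsystem is p₂ = (2 + 2s, 0) = (8/3, 0), and the c = 0 Hamiltonian H(E,w) = (1/2)w² − E²/(2D) + (2a/D)(E³/3 − E⁴/16) satisfies H(8/3, 0) = 0 = H(0,0); that is, the two saddle equilibria (0,0) and (8/3,0) lie on the same zero energy level. -/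
theorem karma_double_heteroclinic_level_general (D : ℝ)
    (M : ℕ) (n : ℝ) (hn : n ^ M = 15 / 16)
    (a : ℝ) (ha : a = 3 / 2 - n ^ M)
    (H : ℝ → ℝ → ℝ)
    (hH : ∀ E w, H E w = (1 / 2) * w ^ 2 - E ^ 2 / (2 * D)
      + (2 * a / D) * (E ^ 3 / 3 - E ^ 4 / 16)) :
    a = 9 / 16 ∧
    Real.sqrt (1 - 1 / (2 * a)) = 1 / 3 ∧
    2 + 2 * Real.sqrt (1 - 1 / (2 * a)) = 8 / 3 ∧
    H (8 / 3) 0 = 0 ∧ H 0 0 = 0 := by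
  obtain rfl : a = 9 / 16 := by rw [ha, hn]; norm_num
  have hs : Real.sqrt (1 - 1 / (2 * (9 / 16))) = 1 / 3 := by
    rw [Real.sqrt_eq_iff_mul_self_eq_of_pos (by norm_num)]
    norm_num
  refine ⟨rfl, hs, by rw [hs]; norm_num, ?_, ?_⟩ <;> rw [hH] <;> ring

/-- For `n^M = 15/16` (so `a = 9/16`): `s = √(1 - 1/(2a)) = 1/3`, the outer
equilibrium is `p₂ = (2 + 2s, 0) = (8/3, 0)`, and the `c = 0` Hamiltonian
`H(E,w) = w²/2 - E²/(2D) + (2a/D)(E³/3 - E⁴/16)` satisfies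
`H(8/3, 0) = 0 = H(0,0)`: the two saddles lie on the same zero energy level. -/
theorem karma_double_heteroclinic_level (D : ℝ) (hD : 0 < D)
    (M : ℕ) (hM : 1 ≤ M) (n : ℝ) (hn : n ^ M = 15 / 16)
    (a : ℝ) (ha : a = 3 / 2 - n ^ M)
    (H : ℝ → ℝ → ℝ)
    (hH : ∀ E w, H E w = (1 / 2) * w ^ 2 - E ^ 2 / (2 * D)
      + (2 * a / D) * (E ^ 3 / 3 - E ^ 4 / 16)) :
    a = 9 / 16 ∧
    Real.sqrt (1 - 1 / (2 * a)) = 1 / 3 ∧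
    2 + 2 * Real.sqrt (1 - 1 / (2 * a)) = 8 / 3 ∧
    H (8 / 3) 0 = 0 ∧ H 0 0 = 0 :=
  karma_double_heteroclinic_level_general D M n hn a ha H hH
end

section
/- Fix D > 0 and suppose n^M = 15/16 and c = 0, so the travelling-wave fast subsystem is E'(z) = w, D·w'(z) = E − (9/8)(E² − E³/4). Then there exists a double heteroclinic connection between the saddles (0,0) and (8/3,0): there are two nonconstant solutions γ₊, γ₋ : ℝ → ℝ² of this system such that γ₊(z) → (0,0) as z → −∞ and γ₊(z) → (8/3,0) as z → +∞, while γ₋(z) → (8/3,0) as z → −∞ and γ₋(z) → (0,0) as z → +∞. -/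
open Filter Topology Real

/-!
Both connections are explicit. For the logistic function `σ`, `σ' = σ (1 - σ)` and
`σ'' = σ (1 - σ) (1 - 2σ)`, so `E(z) = A σ(k z)` solves `E'' = k² E (1 - E/A) (1 - 2E/A)`.
The right-hand side of the Karma system factors as `E (1 - 3E/8) (1 - 3E/4) / D`, which is this
force for `A = 8/3`, `k = 1/√D`: the logistic front runs from `(0,0)` to `(8/3,0)`. The system
is reversible under `(z, E, w) ↦ (-z, E, -w)`, which turns it into the connection back.
-/

def IsNewtonSolution (f : ℝ → ℝ) (γ : ℝ → ℝ × ℝ) : Prop :=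
  ∀ z, HasDerivAt (fun z' => (γ z').1) (γ z).2 z ∧ HasDerivAt (fun z' => (γ z').2) (f (γ z).1) z

def newtonReverse (γ : ℝ → ℝ × ℝ) (z : ℝ) : ℝ × ℝ :=
  ((γ (-z)).1, -(γ (-z)).2)

theorem IsNewtonSolution.reverse {f : ℝ → ℝ} {γ : ℝ → ℝ × ℝ} (hγ : IsNewtonSolution f γ) :
    IsNewtonSolution f (newtonReverse γ) := by
  intro z
  obtain ⟨hE, hw⟩ := hγ (-z)
  constructor
  · exact (hE.comp z (hasDerivAt_neg z)).congr_deriv (by simp [newtonReverse])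
  · exact (hw.comp z (hasDerivAt_neg z)).neg.congr_deriv (by simp [newtonReverse])

theorem tendsto_newtonReverse_atBot {γ : ℝ → ℝ × ℝ} {p : ℝ × ℝ}
    (h : Tendsto γ atTop (𝓝 p)) : Tendsto (newtonReverse γ) atBot (𝓝 (p.1, -p.2)) :=
  have h' := h.comp tendsto_neg_atBot_atTop
  h'.fst_nhds.prodMk_nhds h'.snd_nhds.neg

theorem tendsto_newtonReverse_atTop {γ : ℝ → ℝ × ℝ} {p : ℝ × ℝ}
    (h : Tendsto γ atBot (𝓝 p)) : Tendsto (newtonReverse γ) atTop (𝓝 (p.1, -p.2)) :=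
  have h' := h.comp tendsto_neg_atTop_atBot
  h'.fst_nhds.prodMk_nhds h'.snd_nhds.neg

theorem exists_ne_of_tendsto_atBot_atTop {X : Type*} [TopologicalSpace X] [T2Space X]
    {γ : ℝ → X} {a b : X} (hab : a ≠ b) (ha : Tendsto γ atBot (𝓝 a))
    (hb : Tendsto γ atTop (𝓝 b)) : ∃ z₁ z₂, γ z₁ ≠ γ z₂ := by
  by_contra! hconst
  have hγ : γ = fun _ => γ 0 := funext fun z => hconst z 0
  rw [hγ] at ha hb
  exact hab ((tendsto_nhds_unique ha tendsto_const_nhds).trans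
    (tendsto_nhds_unique hb tendsto_const_nhds).symm)

noncomputable def logisticFront (A k : ℝ) (z : ℝ) : ℝ × ℝ :=
  (A * sigmoid (k * z), A * k * (sigmoid (k * z) * (1 - sigmoid (k * z))))

theorem isNewtonSolution_logisticFront {A : ℝ} (hA : A ≠ 0) (k : ℝ) :
    IsNewtonSolution (fun E => k ^ 2 * E * (1 - E / A) * (1 - 2 * E / A)) (logisticFront A k) := by
  intro z
  have hσ : HasDerivAt (fun z' => sigmoid (k * z'))
      (sigmoid (k * z) * (1 - sigmoid (k * z)) * k) z :=
    (hasDerivAt_sigmoid (k * z)).comp z ((hasDerivAt_id z).const_mul k |>.congr_deriv (mul_one k))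
  constructor
  · exact (hσ.const_mul A).congr_deriv (by simp only [logisticFront]; ring)
  · refine ((hσ.mul (hσ.const_sub 1)).const_mul (A * k)).congr_deriv ?_
    simp only [logisticFront]
    field_simp
    ring

theorem Filter.Tendsto.logisticFront {l : Filter ℝ} {A k s : ℝ}
    (h : Tendsto (fun z => sigmoid (k * z)) l (𝓝 s)) :
    Tendsto (logisticFront A k) l (𝓝 (A * s, A * k * (s * (1 - s)))) :=
  (h.const_mul A).prodMk_nhds ((h.mul (h.const_sub 1)).const_mul (A * k))

theorem tendsto_logisticFront_atBot (A : ℝ) {k : ℝ} (hk : 0 < k) :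
    Tendsto (logisticFront A k) atBot (𝓝 (0, 0)) := by
  simpa using (tendsto_sigmoid_atBot.comp (tendsto_id.const_mul_atBot hk)).logisticFront (A := A)

theorem tendsto_logisticFront_atTop (A : ℝ) {k : ℝ} (hk : 0 < k) :
    Tendsto (logisticFront A k) atTop (𝓝 (A, 0)) := by
  simpa using (tendsto_sigmoid_atTop.comp (tendsto_id.const_mul_atTop hk)).logisticFront (A := A)

/-- For `n^M = 15/16` and `c = 0` the travelling-wave fast subsystem
`E' = w`, `D w' = E - (9/8)(E² - E³/4)` has a double heteroclinic connection
between the saddles `(0,0)` and `(8/3,0)`: there are nonconstant solutions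
`γ₊` from `(0,0)` to `(8/3,0)` and `γ₋` from `(8/3,0)` to `(0,0)`. -/
theorem karma_double_heteroclinic (D : ℝ) (hD : 0 < D) :
    ∃ γp γm : ℝ → ℝ × ℝ,
      (∀ z : ℝ,
        HasDerivAt (fun z' => (γp z').1) ((γp z).2) z ∧
        HasDerivAt (fun z' => (γp z').2)
          (((γp z).1 - (9 / 8) * ((γp z).1 ^ 2 - (γp z).1 ^ 3 / 4)) / D) z) ∧
      (∀ z : ℝ,
        HasDerivAt (fun z' => (γm z').1) ((γm z).2) z ∧
        HasDerivAt (fun z' => (γm z').2)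
          (((γm z).1 - (9 / 8) * ((γm z).1 ^ 2 - (γm z).1 ^ 3 / 4)) / D) z) ∧
      (∃ z₁ z₂ : ℝ, γp z₁ ≠ γp z₂) ∧ (∃ z₁ z₂ : ℝ, γm z₁ ≠ γm z₂) ∧
      Tendsto γp atBot (𝓝 (0, 0)) ∧ Tendsto γp atTop (𝓝 (8 / 3, 0)) ∧
      Tendsto γm atBot (𝓝 (8 / 3, 0)) ∧ Tendsto γm atTop (𝓝 (0, 0)) := by
  set k := (√D)⁻¹
  have hk : 0 < k := by positivity
  have hforce : (fun E : ℝ => (E - 9 / 8 * (E ^ 2 - E ^ 3 / 4)) / D) =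
      fun E => k ^ 2 * E * (1 - E / (8 / 3)) * (1 - 2 * E / (8 / 3)) := by
    funext E
    rw [inv_pow, sq_sqrt hD.le]
    field_simp
    ring
  have hsol : IsNewtonSolution (fun E => (E - 9 / 8 * (E ^ 2 - E ^ 3 / 4)) / D)
      (logisticFront (8 / 3) k) := hforce ▸ isNewtonSolution_logisticFront (by norm_num) k
  have hbot := tendsto_logisticFront_atBot (8 / 3) hk
  have htop := tendsto_logisticFront_atTop (8 / 3) hk
  have hrbot : Tendsto (newtonReverse (logisticFront (8 / 3) k)) atBot (𝓝 (8 / 3, 0)) := by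
    simpa using tendsto_newtonReverse_atBot htop
  have hrtop : Tendsto (newtonReverse (logisticFront (8 / 3) k)) atTop (𝓝 (0, 0)) := by
    simpa using tendsto_newtonReverse_atTop hbot
  have hne : ((0 : ℝ), (0 : ℝ)) ≠ (8 / 3, 0) := by norm_num
  exact ⟨_, _, hsol, hsol.reverse, exists_ne_of_tendsto_atBot_atTop hne hbot htop,
    exists_ne_of_tendsto_atBot_atTop hne.symm hrbot hrtop, hbot, htop, hrbot, hrtop⟩
end

section
/- Fix D > 0 and consider the travelling-wave fast subsystem at n = 1 (so a = 3/2 − 1 = 1/2), namely E'(z) = w, D·w'(z) = c·w + E − (E² − E³/4), whose equilibria are (0,0) and the degenerate point (2,0). There exists c_min > 0 such that for every c ≥ c_min there is a nonconstant solution γ : ℝ → ℝ² of this system with γ(z) → (2, 0) as z → −∞ and γ(z) → (0, 0) as z → +∞; i.e. for all sufficiently large wave speeds there is a heteroclinic connection from (2,0) to the origin. -/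
open Filter Topology

section KarmaAux
open Filter Topology Set MeasureTheory intervalIntegral

namespace KarmaHet

/-- reaction term -/
noncomputable def F (x : ℝ) : ℝ := x - x^2 + x^3/4

lemma F_eq (x : ℝ) : F x = x*(2-x)^2/4 := by unfold F; ring

lemma F_cont : Continuous F := by unfold F; fun_prop

lemma F_nonneg {x : ℝ} (h0 : 0 ≤ x) (h2 : x ≤ 2) : 0 ≤ F x := by
  rw [F_eq]; positivity

lemma F_pos {x : ℝ} (h0 : 0 < x) (h2 : x < 2) : 0 < F x := by
  have h2' : 0 < 2 - x := by linarith
  rw [F_eq]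
  positivity

lemma F_le_one {x : ℝ} (h0 : 0 ≤ x) (h2 : x ≤ 2) : F x ≤ 1 := by
  rw [F_eq]; nlinarith [sq_nonneg (x - 2/3), sq_nonneg x, sq_nonneg (2-x)]

lemma F_hasDerivAt (x : ℝ) : HasDerivAt F (1 - 2*x + 3*x^2/4) x := by
  have h : HasDerivAt (fun x : ℝ => x - x^2 + x^3/4) (1 - 2*x + 3*x^2/4) x := by
    have h1 := hasDerivAt_id x
    have h2 := (hasDerivAt_pow 2 x)
    have h3 := (hasDerivAt_pow 3 x)
    have := (h1.sub h2).add (h3.div_const 4)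
    refine this.congr_deriv ?_
    push_cast
    ring
  exact h

/-- generic first-crossing comparison lemma -/
lemma no_upcross {u : ℝ → ℝ} (hcont : ContinuousOn u (Icc 0 2)) (h0 : u 0 ≤ 0)
    (hder : ∀ x ∈ Ioo (0:ℝ) 2, 0 < u x → ∃ d, d < 0 ∧ HasDerivAt u d x) :
    ∀ x ∈ Icc (0:ℝ) 2, u x ≤ 0 := by
  intro x hx
  by_contra hpos
  push_neg at hpos
  have hx0 : 0 < x := by
    rcases lt_or_eq_of_le hx.1 with h | h
    · exact h
    · exact absurd (h ▸ h0) (by simpa [← h] using not_le.mpr hpos)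
  set A : Set ℝ := {t | t ∈ Icc 0 x ∧ u t ≤ 0} with hA
  have hA0 : (0:ℝ) ∈ A := ⟨⟨le_refl 0, hx0.le⟩, h0⟩
  have hAne : A.Nonempty := ⟨0, hA0⟩
  have hAsub : A ⊆ Icc 0 x := fun t ht => ht.1
  have hclosed : IsClosed A := by
    have : A = Icc 0 x ∩ u ⁻¹' (Iic 0) := by
      ext t; simp only [hA, Set.mem_setOf_eq, Set.mem_inter_iff, Set.mem_preimage,
        Set.mem_Iic]
    rw [this]
    exact ContinuousOn.preimage_isClosed_of_isClosed
      (hcont.mono (Icc_subset_Icc le_rfl hx.2)) isClosed_Icc isClosed_Iic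
  have hAcomp : IsCompact A :=
    (isCompact_Icc (a := (0:ℝ)) (b := x)).of_isClosed_subset hclosed hAsub
  set E₀ := sSup A with hE₀
  have hE₀A : E₀ ∈ A := hAcomp.sSup_mem hAne
  have hE₀x : E₀ ≤ x := hE₀A.1.2
  have hE₀0 : 0 ≤ E₀ := hE₀A.1.1
  have hE₀lt : E₀ < x := lt_of_le_of_ne hE₀x (by
    intro h
    exact absurd hE₀A.2 (by rw [h]; exact not_le.mpr hpos))
  have hupos : ∀ t ∈ Ioc E₀ x, 0 < u t := by
    intro t ht
    by_contra hle
    push_neg at hle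
    have : t ∈ A := ⟨⟨hE₀0.trans ht.1.le, ht.2⟩, hle⟩
    exact absurd (le_csSup hAcomp.bddAbove this) (not_le.mpr ht.1)
  have hanti : StrictAntiOn u (Icc E₀ x) := by
    apply strictAntiOn_of_deriv_neg (convex_Icc E₀ x)
      (hcont.mono (Icc_subset_Icc hE₀0 hx.2))
    intro t ht
    rw [interior_Icc] at ht
    have ht' : t ∈ Ioo (0:ℝ) 2 := ⟨hE₀0.trans_lt ht.1, ht.2.trans_le hx.2⟩
    obtain ⟨d, hd, hder'⟩ := hder t ht' (hupos t ⟨ht.1, ht.2.le⟩)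
    rw [hder'.deriv]; exact hd
  have := hanti (left_mem_Icc.mpr hE₀x) (right_mem_Icc.mpr hE₀x) hE₀lt
  exact absurd (this.trans_le hE₀A.2) (not_lt.mpr hpos.le)


section Consts
variable {D c : ℝ} (hD : 0 < D) (hc : Real.sqrt D ≤ c)

/-- α = (√(8D))⁻¹ -/
noncomputable def al (D : ℝ) : ℝ := (Real.sqrt (8*D))⁻¹

lemma al_pos (hD : 0 < D) : 0 < al D := by
  unfold al
  positivity

lemma al_sq (hD : 0 < D) : D * (al D)^2 = 8⁻¹ := by
  unfold al
  rw [← Real.sqrt_inv]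
  rw [Real.sq_sqrt (by positivity)]
  field_simp

lemma c_pos (hD : 0 < D) (hc : Real.sqrt D ≤ c) : 0 < c :=
  lt_of_lt_of_le (Real.sqrt_pos.mpr hD) hc

lemma cstar_le (hD : 0 < D) (hc : Real.sqrt D ≤ c) : Real.sqrt (D/2) ≤ c :=
  le_trans (Real.sqrt_le_sqrt (by linarith)) hc

lemma cstar_al (hD : 0 < D) : Real.sqrt (D/2) * al D = 4⁻¹ := by
  unfold al
  rw [← Real.sqrt_inv, ← Real.sqrt_mul (by positivity)]
  have : D / 2 * (8*D)⁻¹ = (4:ℝ)⁻¹^2 := by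
    field_simp
    ring
  rw [this, Real.sqrt_sq (by norm_num)]

/-- upper barrier -/
noncomputable def ub (D : ℝ) (x : ℝ) : ℝ := (al D)^2 * x^2 * (2-x)^2 / 2

lemma ub_nonneg (hD : 0 < D) (x : ℝ) : 0 ≤ ub D x := by
  unfold ub; positivity

lemma ub_zero : ub D 0 = 0 := by unfold ub; ring

lemma ub_le (hD : 0 < D) {x : ℝ} (h0 : 0 ≤ x) (h2 : x ≤ 2) : ub D x ≤ (al D)^2 / 2 := by
  unfold ub
  have ht1 : x*(2-x) ≤ 1 := by nlinarith [sq_nonneg (x-1)]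
  have ht0 : 0 ≤ x*(2-x) := by nlinarith
  nlinarith [mul_le_mul ht1 ht1 ht0 zero_le_one, sq_nonneg (al D)]

lemma sqrt_ub (hD : 0 < D) {x : ℝ} (h0 : 0 ≤ x) (h2 : x ≤ 2) :
    Real.sqrt (2 * ub D x) = al D * x * (2-x) := by
  have : 2 * ub D x = (al D * x * (2-x))^2 := by unfold ub; ring
  rw [this, Real.sqrt_sq]
  have := al_pos hD
  apply mul_nonneg (mul_nonneg this.le h0) (by linarith)

lemma ub_hasDerivAt (x : ℝ) : HasDerivAt (ub D) ((al D)^2 * x * (2-x) * (2-2*x)) x := by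
  have h : HasDerivAt (fun x : ℝ => (al D)^2 * x^2 * (2-x)^2 / 2)
      ((al D)^2 * x * (2-x) * (2-2*x)) x := by
    have h1 : HasDerivAt (fun x : ℝ => x^2) (2*x) x := by
      simpa using hasDerivAt_pow 2 x
    have h2 : HasDerivAt (fun x : ℝ => (2-x)^2) (2*(2-x)*(-1)) x := by
      have hb : HasDerivAt (fun x : ℝ => 2-x) (-1) x := by
        simpa using (hasDerivAt_id x).const_sub 2
      exact ((hasDerivAt_pow 2 (2-x)).comp x hb).congr_deriv (by norm_num)
    have H := ((h1.mul h2).const_mul ((al D)^2)).div_const 2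
    have heq : (fun x : ℝ => (al D)^2 * x^2 * (2-x)^2 / 2)
        = fun x : ℝ => (al D)^2 * (x^2 * (2-x)^2) / 2 := by
      funext y; ring
    rw [heq]
    refine H.congr_deriv ?_
    ring
  have heq2 : ub D = fun x : ℝ => (al D)^2 * x^2 * (2-x)^2 / 2 := by
    funext y; unfold ub; ring
  rw [heq2]
  exact h

/-- the key ODE identity for the upper barrier -/
lemma ub_ode (hD : 0 < D) {x : ℝ} (h0 : 0 ≤ x) (h2 : x ≤ 2) :
    D * ((al D)^2 * x * (2-x) * (2-2*x)) =
      F x - Real.sqrt (D/2) * Real.sqrt (2 * ub D x) := by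
  rw [sqrt_ub hD h0 h2]
  have h1 := al_sq hD
  have h2' := cstar_al (D := D) hD
  have hF : F x = x*(2-x)^2/4 := by unfold F; ring
  rw [hF]
  linear_combination (x*(2-x)*(2-2*x)) * h1 + (x*(2-x)) * h2'

/-- θ with Dθ² + cθ = 1 -/
noncomputable def th (D c : ℝ) : ℝ := (Real.sqrt (c^2 + 4*D) - c) / (2*D)

lemma th_pos (hD : 0 < D) (hc : Real.sqrt D ≤ c) : 0 < th D c := by
  have hc0 := c_pos hD hc
  have h : c < Real.sqrt (c^2 + 4*D) := by
    have : c = Real.sqrt (c^2) := by rw [Real.sqrt_sq hc0.le]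
    nth_rewrite 1 [this]
    exact Real.sqrt_lt_sqrt (by positivity) (by linarith)
  unfold th
  have h2D : 0 < 2*D := by linarith
  exact div_pos (by linarith) h2D

lemma th_eq (hD : 0 < D) : D * (th D c)^2 + c * th D c = 1 := by
  have hs : Real.sqrt (c^2 + 4*D) ^ 2 = c^2 + 4*D :=
    Real.sq_sqrt (by positivity)
  have hD' : D ≠ 0 := ne_of_gt hD
  unfold th
  field_simp
  rw [show c^2 + D*4 = c^2 + 4*D by ring]
  linear_combination hs

/-- lower barrier -/
noncomputable def lb (D c : ℝ) (x : ℝ) : ℝ := (th D c)^2 * (F x)^2 / 2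

lemma lb_zero : lb D c 0 = 0 := by unfold lb F; norm_num

lemma lb_nonneg (x : ℝ) : 0 ≤ lb D c x := by unfold lb; positivity

lemma sqrt_lb (hD : 0 < D) (hc : Real.sqrt D ≤ c) {x : ℝ} (h0 : 0 ≤ x) (h2 : x ≤ 2) :
    Real.sqrt (2 * lb D c x) = th D c * F x := by
  have : 2 * lb D c x = (th D c * F x)^2 := by unfold lb; ring
  rw [this, Real.sqrt_sq]
  have h1 := th_pos hD hc
  have h2' : 0 ≤ F x := by
    have : F x = x*(2-x)^2/4 := by unfold F; ring
    rw [this]; positivity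
  positivity

lemma lb_hasDerivAt (x : ℝ) :
    HasDerivAt (lb D c) ((th D c)^2 * F x * (1 - 2*x + 3*x^2/4)) x := by
  have hF : HasDerivAt F (1 - 2*x + 3*x^2/4) x := by
    have h1 := hasDerivAt_id x
    have h2 := (hasDerivAt_pow 2 x)
    have h3 := (hasDerivAt_pow 3 x)
    have := (h1.sub h2).add (h3.div_const 4)
    refine this.congr_deriv ?_
    push_cast; ring
  have H := ((hF.mul hF).const_mul ((th D c)^2)).div_const 2
  have heq : lb D c = fun x : ℝ => (th D c)^2 * (F x * F x) / 2 := by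
    funext y; unfold lb; ring
  rw [heq]
  refine H.congr_deriv ?_
  ring

end Consts

section PL
variable {D c : ℝ}

lemma sqrt_diff_le {eps A B : ℝ} (he : 0 < eps) (hA : eps^2 ≤ A) (hB : eps^2 ≤ B) :
    |Real.sqrt A - Real.sqrt B| ≤ |A - B| / (2*eps) := by
  have key : ∀ X Y : ℝ, eps^2 ≤ X → eps^2 ≤ Y → Y ≤ X →
      Real.sqrt X - Real.sqrt Y ≤ (X - Y)/(2*eps) := by
    intro X Y hX hY hYX
    have hX0 : (0:ℝ) ≤ X := le_trans (by positivity) hX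
    have hY0 : (0:ℝ) ≤ Y := le_trans (by positivity) hY
    have h1 : eps ≤ Real.sqrt X := by
      rw [show eps = Real.sqrt (eps^2) by rw [Real.sqrt_sq he.le]]
      exact Real.sqrt_le_sqrt hX
    have h2 : eps ≤ Real.sqrt Y := by
      rw [show eps = Real.sqrt (eps^2) by rw [Real.sqrt_sq he.le]]
      exact Real.sqrt_le_sqrt hY
    have h3 : Real.sqrt Y ≤ Real.sqrt X := Real.sqrt_le_sqrt hYX
    have hs : (Real.sqrt X - Real.sqrt Y) * (Real.sqrt X + Real.sqrt Y) = X - Y := by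
      have := Real.sq_sqrt hX0
      have := Real.sq_sqrt hY0
      nlinarith
    rw [div_eq_inv_mul, ← hs]
    rw [← sub_nonneg]
    have h2e : (0:ℝ) < 2*eps := by linarith
    have : (2*eps)⁻¹ * ((Real.sqrt X - Real.sqrt Y) * (Real.sqrt X + Real.sqrt Y))
        - (Real.sqrt X - Real.sqrt Y)
        = (Real.sqrt X - Real.sqrt Y) * ((Real.sqrt X + Real.sqrt Y) - 2*eps) * (2*eps)⁻¹ := by
      field_simp
    rw [this]
    have hnn1 : 0 ≤ Real.sqrt X - Real.sqrt Y := by linarith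
    have hnn2 : 0 ≤ (Real.sqrt X + Real.sqrt Y) - 2*eps := by linarith
    positivity
  rcases le_total B A with h | h
  · have h3 : Real.sqrt B ≤ Real.sqrt A := Real.sqrt_le_sqrt h
    rw [abs_of_nonneg (sub_nonneg.mpr h3), abs_of_nonneg (sub_nonneg.mpr h)]
    exact key A B hA hB h
  · have h3 : Real.sqrt A ≤ Real.sqrt B := Real.sqrt_le_sqrt h
    rw [abs_of_nonpos (sub_nonpos.mpr h3), abs_of_nonpos (sub_nonpos.mpr h)]
    have := key B A hB hA h
    rw [neg_sub, show -(A - B)/(2*eps) = (B-A)/(2*eps) by ring]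
    exact this

/-- the regularized vector field -/
noncomputable def vf (D c eps : ℝ) (t S : ℝ) : ℝ :=
  (F t - c * Real.sqrt (2 * max S 0 + eps^2)) / D

lemma sol_exists (hD : 0 < D) (hc : Real.sqrt D ≤ c) {eps : ℝ} (he : 0 < eps) (he1 : eps ≤ 1) :
    ∃ Sf : ℝ → ℝ, Sf 0 = 0 ∧
      ∀ t ∈ Icc (0:ℝ) 2, HasDerivWithinAt Sf (vf D c eps t (Sf t)) (Icc (0:ℝ) 2) t := by
  have hc0 : 0 < c := c_pos hD hc
  obtain ⟨B, hB⟩ : ∃ B : ℝ, B = (2 + 4*c)/D := ⟨_, rfl⟩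
  have hBpos : 0 < B := by rw [hB]; positivity
  obtain ⟨R, hR⟩ : ∃ R : ℝ, R = 1 + (2*B)^2 := ⟨_, rfl⟩
  have hR1 : (1:ℝ) ≤ R := by rw [hR]; nlinarith
  have hRpos : (0:ℝ) < R := by linarith
  obtain ⟨sR, hsR⟩ : ∃ sR : ℝ, sR = Real.sqrt R := ⟨_, rfl⟩
  have hsRsq : sR^2 = R := by rw [hsR]; exact Real.sq_sqrt hRpos.le
  have hsR1 : (1:ℝ) ≤ sR := by
    rw [hsR, show (1:ℝ) = Real.sqrt 1 by simp [Real.sqrt_one]]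
    exact Real.sqrt_le_sqrt hR1
  have hsR2B : 2*B ≤ sR := by
    have h2B : (2*B)^2 ≤ R := by rw [hR]; nlinarith
    rw [hsR]
    calc 2*B = Real.sqrt ((2*B)^2) := by rw [Real.sqrt_sq (by positivity)]
    _ ≤ Real.sqrt R := Real.sqrt_le_sqrt h2B
  obtain ⟨C, hC⟩ : ∃ C : ℝ, C = (1 + c * Real.sqrt (2*R+1))/D := ⟨_, rfl⟩
  have hC0 : 0 ≤ C := by rw [hC]; positivity
  obtain ⟨L, hL⟩ : ∃ L : NNReal, L = Real.toNNReal (c/(D*eps)) := ⟨_, rfl⟩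
  have hpl : IsPicardLindelof (tmin := 0) (tmax := 2) (vf D c eps) ⟨0, by norm_num⟩ 0
      R.toNNReal 0 C.toNNReal L := by
    constructor
    · intro t _
      rw [lipschitzOnWith_iff_dist_le_mul]
      intro x _ y _
      have hdist : dist (vf D c eps t x) (vf D c eps t y)
          = (c/D) * |Real.sqrt (2*max x 0 + eps^2) - Real.sqrt (2*max y 0 + eps^2)| := by
        rw [Real.dist_eq]
        unfold vf
        rw [div_sub_div_same]
        rw [show (F t - c * Real.sqrt (2 * max x 0 + eps ^ 2) -
            (F t - c * Real.sqrt (2 * max y 0 + eps ^ 2))) / D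
            = (c/D) * (Real.sqrt (2 * max y 0 + eps ^ 2)
              - Real.sqrt (2 * max x 0 + eps ^ 2)) by field_simp; ring]
        rw [abs_mul, abs_of_pos (by positivity), abs_sub_comm]
      rw [hdist, Real.dist_eq]
      have h1 : |Real.sqrt (2*max x 0 + eps^2) - Real.sqrt (2*max y 0 + eps^2)|
          ≤ |(2*max x 0 + eps^2) - (2*max y 0 + eps^2)| / (2*eps) := by
        apply sqrt_diff_le he
        · nlinarith [le_max_right x 0]
        · nlinarith [le_max_right y 0]
      have h2 : |(2*max x 0 + eps^2) - (2*max y 0 + eps^2)| ≤ 2 * |x - y| := by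
        rw [show (2*max x 0 + eps^2) - (2*max y 0 + eps^2) = 2*(max x 0 - max y 0) by ring]
        rw [abs_mul, abs_of_pos (by norm_num : (0:ℝ) < 2)]
        have := abs_max_sub_max_le_abs x y 0
        linarith
      have hcoe : (L : ℝ) = c/(D*eps) := by
        rw [hL, Real.coe_toNNReal]
        positivity
      rw [hcoe]
      calc (c/D) * |Real.sqrt (2*max x 0 + eps^2) - Real.sqrt (2*max y 0 + eps^2)|
          ≤ (c/D) * (2 * |x - y| / (2*eps)) := by
            apply mul_le_mul_of_nonneg_left _ (by positivity)
            exact le_trans h1 ((div_le_div_iff_of_pos_right (by positivity)).mpr h2)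
        _ = c/(D*eps) * |x - y| := by field_simp
    · intro x _
      apply ContinuousOn.div_const
      apply ContinuousOn.sub _ continuousOn_const
      exact F_cont.continuousOn
    · intro t ht x hx
      simp only [Real.norm_eq_abs]
      unfold vf
      rw [Real.coe_toNNReal _ hC0]
      rw [abs_div, abs_of_pos hD, hC]
      apply (div_le_div_iff_of_pos_right hD).mpr
      have hFt : |F t| ≤ 1 := by
        rw [abs_of_nonneg (F_nonneg ht.1 ht.2)]
        exact F_le_one ht.1 ht.2
      have hx' : |x| ≤ R := by
        rw [Real.coe_toNNReal _ hRpos.le] at hx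
        rw [Real.closedBall_eq_Icc] at hx
        rw [abs_le]
        constructor <;> [linarith [hx.1]; linarith [hx.2]]
      have hsq : Real.sqrt (2*max x 0 + eps^2) ≤ Real.sqrt (2*R+1) := by
        apply Real.sqrt_le_sqrt
        have : max x 0 ≤ R := max_le (le_trans (le_abs_self x) hx') hRpos.le
        nlinarith [le_max_right x 0]
      calc |F t - c * Real.sqrt (2*max x 0 + eps^2)|
          ≤ |F t| + c * Real.sqrt (2*max x 0 + eps^2) := by
            have h0 : 0 ≤ Real.sqrt (2*max x 0 + eps^2) := Real.sqrt_nonneg _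
            have := abs_sub (F t) (c * Real.sqrt (2*max x 0 + eps^2))
            rw [abs_sub_comm] at this ⊢
            calc |c * Real.sqrt (2*max x 0 + eps^2) - F t|
                ≤ |c * Real.sqrt (2*max x 0 + eps^2)| + |F t| := abs_sub _ _
              _ = c * Real.sqrt (2*max x 0 + eps^2) + |F t| := by
                  rw [abs_of_nonneg (by positivity)]
              _ = |F t| + c * Real.sqrt (2*max x 0 + eps^2) := by ring
        _ ≤ 1 + c * Real.sqrt (2*R+1) := by
            have := mul_le_mul_of_nonneg_left hsq hc0.le
            linarith
    · have hsq2 : Real.sqrt (2*R+1) ≤ 2*sR := by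
        have h4 : 2*R + 1 ≤ (2*sR)^2 := by nlinarith
        calc Real.sqrt (2*R+1) ≤ Real.sqrt ((2*sR)^2) := Real.sqrt_le_sqrt h4
          _ = 2*sR := Real.sqrt_sq (by positivity)
      have hmax : max ((2:ℝ) - 0) (0 - 0) = 2 := by norm_num
      show (C.toNNReal : ℝ) * max ((2:ℝ) - 0) (0 - 0) ≤ (R.toNNReal : ℝ) - ((0:NNReal):ℝ)
      rw [Real.coe_toNNReal _ hC0, Real.coe_toNNReal _ hRpos.le, NNReal.coe_zero]
      rw [hmax]
      have hC2 : C * 2 ≤ (2 + 4*c*sR)/D := by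
        rw [hC]
        rw [div_mul_eq_mul_div, div_le_div_iff₀ hD hD]
        have := mul_le_mul_of_nonneg_left hsq2 hc0.le
        nlinarith
      have h5 : (2 + 4*c*sR)/D ≤ B * sR := by
        rw [hB, div_mul_eq_mul_div, div_le_div_iff₀ hD hD]
        nlinarith
      have h6 : B * sR ≤ R := by nlinarith
      linarith
  obtain ⟨f, hf0, hf⟩ := hpl.exists_eq_forall_mem_Icc_hasDerivWithinAt₀
  exact ⟨f, hf0, hf⟩

end PL

section Limit
variable {D c : ℝ}

lemma vf_contOn {eps : ℝ} (hD : 0 < D) {g : ℝ → ℝ} {s : Set ℝ} (hg : ContinuousOn g s) :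
    ContinuousOn (fun t => vf D c eps t (g t)) s := by
  unfold vf
  apply ContinuousOn.div_const
  apply ContinuousOn.sub
  · exact F_cont.continuousOn
  · apply ContinuousOn.mul continuousOn_const
    apply Real.continuous_sqrt.comp_continuousOn
    exact (continuousOn_const.mul
      ((continuous_id.max continuous_const).comp_continuousOn hg)).add continuousOn_const

lemma vf_bound (hD : 0 < D) (hc : Real.sqrt D ≤ c) {eps t S0 : ℝ}
    (ht : t ∈ Icc (0:ℝ) 2) (he0 : 0 ≤ eps) (he1 : eps ≤ 1) (hS : max S0 0 ≤ (al D)^2/2) :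
    |vf D c eps t S0| ≤ (1 + c * Real.sqrt ((al D)^2 + 1))/D := by
  have hc0 : 0 < c := c_pos hD hc
  unfold vf
  rw [abs_div, abs_of_pos hD]
  apply (div_le_div_iff_of_pos_right hD).mpr
  have hFt : |F t| ≤ 1 := by
    rw [abs_of_nonneg (F_nonneg ht.1 ht.2)]
    exact F_le_one ht.1 ht.2
  have hsq : Real.sqrt (2 * max S0 0 + eps^2) ≤ Real.sqrt ((al D)^2 + 1) := by
    apply Real.sqrt_le_sqrt
    nlinarith [le_max_right S0 0]
  have h0 : (0:ℝ) ≤ Real.sqrt (2 * max S0 0 + eps^2) := Real.sqrt_nonneg _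
  calc |F t - c * Real.sqrt (2 * max S0 0 + eps^2)|
      ≤ |F t| + c * Real.sqrt (2 * max S0 0 + eps^2) := by
        have habs : |c * Real.sqrt (2 * max S0 0 + eps^2)|
            = c * Real.sqrt (2 * max S0 0 + eps^2) := abs_of_nonneg (by positivity)
        calc |F t - c * Real.sqrt (2 * max S0 0 + eps^2)|
            ≤ |F t| + |c * Real.sqrt (2 * max S0 0 + eps^2)| := abs_sub _ _
          _ = |F t| + c * Real.sqrt (2 * max S0 0 + eps^2) := by rw [habs]
    _ ≤ 1 + c * Real.sqrt ((al D)^2 + 1) := by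
        have := mul_le_mul_of_nonneg_left hsq hc0.le
        linarith

set_option maxHeartbeats 1600000 in
/-- The limit solution: continuous on [0,2], squeezed between the barriers,
and solving the phase-plane ODE on (0,2). -/
lemma S_exists (hD : 0 < D) (hc : Real.sqrt D ≤ c) :
    ∃ S : ℝ → ℝ, ContinuousOn S (Icc 0 2) ∧
      (∀ x ∈ Icc (0:ℝ) 2, lb D c x ≤ S x ∧ S x ≤ ub D x) ∧
      (∀ x ∈ Ioo (0:ℝ) 2, HasDerivAt S ((F x - c * Real.sqrt (2 * S x))/D) x) := by
  have hc0 : 0 < c := c_pos hD hc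
  have hcs := cstar_le hD hc
  have hcsp : 0 < Real.sqrt (D/2) := Real.sqrt_pos.mpr (by linarith)
  -- the approximating sequence
  have hex : ∀ n : ℕ, ∃ Sf : ℝ → ℝ, Sf 0 = 0 ∧
      ∀ t ∈ Icc (0:ℝ) 2, HasDerivWithinAt Sf (vf D c (1/(n+1)) t (Sf t)) (Icc (0:ℝ) 2) t := by
    intro n
    apply sol_exists hD hc
    · positivity
    · rw [div_le_one (by positivity)]
      have : (0:ℝ) ≤ n := Nat.cast_nonneg n
      linarith
  choose SS hSS0 hSSd using hex
  have hepos : ∀ n : ℕ, (0:ℝ) < 1/(n+1) := fun n => by positivity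
  have hcont : ∀ n, ContinuousOn (SS n) (Icc 0 2) := fun n t ht =>
    ((hSSd n t ht).differentiableWithinAt).continuousWithinAt
  have hderiv : ∀ n, ∀ x ∈ Ioo (0:ℝ) 2,
      HasDerivAt (SS n) (vf D c (1/(n+1)) x (SS n x)) x := by
    intro n x hx
    exact (hSSd n x (Ioo_subset_Icc_self hx)).hasDerivAt (Icc_mem_nhds hx.1 hx.2)
  -- upper bound
  have hub : ∀ n, ∀ x ∈ Icc (0:ℝ) 2, SS n x ≤ ub D x := by
    intro n
    have := no_upcross (u := fun x => SS n x - ub D x)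
      ((hcont n).sub (by unfold ub; fun_prop))
      (by show SS n 0 - ub D 0 ≤ 0; rw [hSS0 n, ub_zero]; norm_num)
      ?_
    · intro x hx
      have h2 : SS n x - ub D x ≤ 0 := this x hx
      linarith
    · intro x hx hpos
      refine ⟨vf D c (1/(n+1)) x (SS n x) - (al D)^2 * x * (2-x) * (2-2*x),
        ?_, (hderiv n x hx).sub (ub_hasDerivAt x)⟩
      have hx0 := hx.1
      have hx2 := hx.2
      have hpos' : 0 < SS n x - ub D x := hpos
      have hubx : ub D x < SS n x := by linarith
      have hub0 : 0 ≤ ub D x := ub_nonneg hD x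
      have hmax : max (SS n x) 0 = SS n x := max_eq_left (by linarith)
      have hode := ub_ode hD hx0.le hx2.le
      have hub' : (al D)^2 * x * (2-x) * (2-2*x)
          = (F x - Real.sqrt (D/2) * Real.sqrt (2 * ub D x))/D := by
        rw [eq_div_iff hD.ne']
        linear_combination hode
      rw [hub']
      unfold vf
      rw [hmax, div_sub_div_same]
      apply div_neg_of_neg_of_pos _ hD
      have hsqlt : Real.sqrt (2 * ub D x) < Real.sqrt (2 * SS n x + (1/(n+1))^2) := by
        apply Real.sqrt_lt_sqrt (by linarith)
        have := hepos n
        nlinarith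
      have h1 : Real.sqrt (D/2) * Real.sqrt (2 * ub D x)
          ≤ c * Real.sqrt (2 * ub D x) :=
        mul_le_mul_of_nonneg_right hcs (Real.sqrt_nonneg _)
      have h2 : c * Real.sqrt (2 * ub D x) < c * Real.sqrt (2 * SS n x + (1/(n+1))^2) :=
        (mul_lt_mul_iff_right₀ hc0).mpr hsqlt
      linarith
  -- monotonicity in n
  have hmono : ∀ n, ∀ x ∈ Icc (0:ℝ) 2, SS n x ≤ SS (n+1) x := by
    intro n
    have := no_upcross (u := fun x => SS n x - SS (n+1) x)
      ((hcont n).sub (hcont (n+1)))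
      (by show SS n 0 - SS (n+1) 0 ≤ 0; rw [hSS0 n, hSS0 (n+1)]; norm_num)
      ?_
    · intro x hx
      have h2 : SS n x - SS (n+1) x ≤ 0 := this x hx
      linarith
    · intro x hx hpos
      refine ⟨_, ?_, (hderiv n x hx).sub (hderiv (n+1) x hx)⟩
      have hpos' : 0 < SS n x - SS (n+1) x := hpos
      have hlt : SS (n+1) x < SS n x := by linarith
      unfold vf
      rw [div_sub_div_same]
      apply div_neg_of_neg_of_pos _ hD
      have harg : 2 * max (SS (n+1) x) 0 + (1/((n+1:ℕ)+1))^2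
          < 2 * max (SS n x) 0 + (1/((n:ℕ)+1))^2 := by
        have hm : max (SS (n+1) x) 0 ≤ max (SS n x) 0 :=
          max_le_max hlt.le (le_refl 0)
        have he : (1/((n+1:ℕ)+1):ℝ)^2 < (1/((n:ℕ)+1))^2 := by
          apply pow_lt_pow_left₀ _ (by positivity)
          · norm_num
          apply div_lt_div_of_pos_left one_pos (by positivity)
          push_cast
          linarith
        push_cast at he ⊢
        linarith
      have hsqlt : Real.sqrt (2 * max (SS (n+1) x) 0 + (1/((n+1:ℕ)+1))^2)
          < Real.sqrt (2 * max (SS n x) 0 + (1/((n:ℕ)+1))^2) := by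
        apply Real.sqrt_lt_sqrt _ harg
        positivity
      push_cast at hsqlt ⊢
      nlinarith [hsqlt]
  have hmono' : ∀ x ∈ Icc (0:ℝ) 2, Monotone (fun n => SS n x) := by
    intro x hx
    apply monotone_nat_of_le_succ
    intro n
    exact hmono n x hx
  -- the limit
  set Slim : ℝ → ℝ := fun x => ⨆ n, SS n x with hSlim_def
  have hbdd : ∀ x ∈ Icc (0:ℝ) 2, BddAbove (Set.range fun n => SS n x) := by
    intro x hx
    exact ⟨ub D x, by rintro y ⟨n, rfl⟩; exact hub n x hx⟩
  have htend : ∀ x ∈ Icc (0:ℝ) 2, Tendsto (fun n => SS n x) atTop (𝓝 (Slim x)) := by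
    intro x hx
    exact tendsto_atTop_ciSup (hmono' x hx) (hbdd x hx)
  have hSlim_ub : ∀ x ∈ Icc (0:ℝ) 2, Slim x ≤ ub D x := by
    intro x hx
    exact ciSup_le (fun n => hub n x hx)
  have hSlim0 : Slim 0 = 0 := by
    rw [hSlim_def]
    simp only
    rw [show (fun n => SS n 0) = fun _ => (0:ℝ) from funext (fun n => hSS0 n)]
    exact ciSup_const
  -- integral equation for the approximations
  have hintn : ∀ n, ∀ x ∈ Icc (0:ℝ) 2,
      SS n x = ∫ t in (0:ℝ)..x, vf D c (1/(n+1)) t (SS n t) := by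
    intro n x hx
    have h0x : (0:ℝ) ≤ x := hx.1
    have hder' : ∀ t ∈ Ioo (0:ℝ) x, HasDerivWithinAt (SS n)
        (vf D c (1/(n+1)) t (SS n t)) (Ioi t) t := by
      intro t ht
      exact (hderiv n t ⟨ht.1, lt_of_lt_of_le ht.2 hx.2⟩).hasDerivWithinAt
    have hgc : ContinuousOn (fun t => vf D c (1/(n+1)) t (SS n t)) (Icc 0 x) :=
      vf_contOn hD ((hcont n).mono (Icc_subset_Icc le_rfl hx.2))
    have hgi : IntervalIntegrable (fun t => vf D c (1/(n+1)) t (SS n t)) volume 0 x := by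
      apply ContinuousOn.intervalIntegrable
      rwa [uIcc_of_le h0x]
    have := intervalIntegral.integral_eq_sub_of_hasDeriv_right_of_le h0x
      (((hcont n).mono (Icc_subset_Icc le_rfl hx.2))) hder' hgi
    rw [this, hSS0 n, sub_zero]
  -- measurability of the limit on [0,2]
  have hSlimMeas : AEStronglyMeasurable Slim (volume.restrict (Icc (0:ℝ) 2)) := by
    apply aestronglyMeasurable_of_tendsto_ae (u := atTop) (f := fun n => SS n)
    · intro n
      exact ((hcont n).aestronglyMeasurable measurableSet_Icc)
    · rw [ae_restrict_iff' measurableSet_Icc]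
      exact ae_of_all _ (fun t ht => htend t ht)
  -- integral equation for the limit
  have hM : ∀ n : ℕ, ∀ t ∈ Icc (0:ℝ) 2,
      |vf D c (1/(n+1)) t (SS n t)| ≤ (1 + c * Real.sqrt ((al D)^2 + 1))/D := by
    intro n t ht
    apply vf_bound hD hc ht (by positivity)
    · rw [div_le_one (by positivity)]
      have : (0:ℝ) ≤ n := Nat.cast_nonneg n
      linarith
    · have h1 := hub n t ht
      have h2 := ub_le hD ht.1 ht.2
      have : SS n t ≤ (al D)^2/2 := le_trans h1 h2
      exact max_le this (by positivity)
  have hSlimInt : ∀ x ∈ Icc (0:ℝ) 2, Slim x = ∫ t in (0:ℝ)..x, vf D c 0 t (Slim t) := by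
    intro x hx
    have h0x : (0:ℝ) ≤ x := hx.1
    have hIsub : Set.uIoc (0:ℝ) x ⊆ Icc (0:ℝ) 2 := by
      rw [uIoc_of_le h0x]
      exact fun t ht => ⟨ht.1.le, le_trans ht.2 hx.2⟩
    have hlim := intervalIntegral.tendsto_integral_filter_of_dominated_convergence
      (μ := volume) (a := (0:ℝ)) (b := x) (l := atTop)
      (F := fun (n : ℕ) (t : ℝ) => vf D c (1/((n:ℝ)+1)) t (SS n t))
      (f := fun t => vf D c 0 t (Slim t))
      (bound := fun _ => (1 + c * Real.sqrt ((al D)^2 + 1))/D)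
      ?_ ?_ ?_ ?_
    · have h1 : Tendsto (fun n => SS n x) atTop (𝓝 (Slim x)) := htend x hx
      have h2 : Tendsto (fun n : ℕ => ∫ t in (0:ℝ)..x, vf D c (1/((n:ℝ)+1)) t (SS n t)) atTop
          (𝓝 (Slim x)) := by
        apply Tendsto.congr _ h1
        intro n
        exact hintn n x hx
      exact tendsto_nhds_unique h2 hlim
    · apply Filter.Eventually.of_forall
      intro n
      exact (vf_contOn hD ((hcont n).mono hIsub)).aestronglyMeasurable measurableSet_uIoc
    · apply Filter.Eventually.of_forall
      intro n
      apply ae_of_all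
      intro t ht
      rw [Real.norm_eq_abs]
      exact hM n t (hIsub ht)
    · exact intervalIntegrable_const
    · apply ae_of_all
      intro t ht
      have ht2 := hIsub ht
      -- pointwise convergence of the integrands
      have hS : Tendsto (fun n => SS n t) atTop (𝓝 (Slim t)) := htend t ht2
      have he : Tendsto (fun n : ℕ => (1/((n:ℝ)+1))^2) atTop (𝓝 0) := by
        have := (tendsto_one_div_add_atTop_nhds_zero_nat :
          Tendsto (fun n : ℕ => 1 / ((n:ℝ) + 1)) atTop (𝓝 0))
        have h2 := this.pow 2
        simpa using h2
      have harg : Tendsto (fun n => 2 * max (SS n t) 0 + (1/((n:ℝ)+1))^2) atTop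
          (𝓝 (2 * max (Slim t) 0 + 0)) :=
        (((hS.max tendsto_const_nhds).const_mul 2)).add he
      have hsq : Tendsto (fun n => Real.sqrt (2 * max (SS n t) 0 + (1/((n:ℝ)+1))^2)) atTop
          (𝓝 (Real.sqrt (2 * max (Slim t) 0 + 0))) :=
        (Real.continuous_sqrt.continuousAt).tendsto.comp harg
      have hlim2 : Tendsto
          (fun n => (F t - c * Real.sqrt (2 * max (SS n t) 0 + (1/((n:ℝ)+1))^2))/D) atTop
          (𝓝 ((F t - c * Real.sqrt (2 * max (Slim t) 0 + 0))/D)) :=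
        (tendsto_const_nhds.sub (hsq.const_mul c)).div_const D
      have h00 : vf D c 0 t (Slim t)
          = (F t - c * Real.sqrt (2 * max (Slim t) 0 + 0))/D := by
        unfold vf; norm_num
      show Tendsto (fun n : ℕ => vf D c (1/((n:ℝ)+1)) t (SS n t)) atTop
        (𝓝 (vf D c 0 t (Slim t)))
      rw [h00]
      exact hlim2.congr (fun n => by unfold vf; norm_num)
  -- the limiting integrand
  set G : ℝ → ℝ := fun t => vf D c 0 t (Slim t) with hG_def
  have hFcont : Continuous F := F_cont
  have hGmeas : AEStronglyMeasurable G (volume.restrict (Icc (0:ℝ) 2)) := by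
    have hc2 : Continuous (fun p : ℝ × ℝ => (F p.1 - c * Real.sqrt (2 * max p.2 0 + 0^2))/D) := by
      apply Continuous.div_const
      apply Continuous.sub (F_cont.comp continuous_fst)
      exact continuous_const.mul (Real.continuous_sqrt.comp
        ((continuous_const.mul (continuous_snd.max continuous_const)).add continuous_const))
    exact hc2.comp_aestronglyMeasurable (aestronglyMeasurable_id.prodMk hSlimMeas)
  have hSlim_lb0 : ∀ x ∈ Icc (0:ℝ) 2, SS 0 x ≤ Slim x := by
    intro x hx
    exact le_ciSup (hbdd x hx) 0
  have hGbound : ∀ t ∈ Icc (0:ℝ) 2, |G t| ≤ (1 + c * Real.sqrt ((al D)^2 + 1))/D := by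
    intro t ht
    apply vf_bound hD hc ht le_rfl (by norm_num)
    have h2 := ub_le hD ht.1 ht.2
    exact max_le (le_trans (hSlim_ub t ht) h2) (by positivity)
  have hGint : IntegrableOn G (Icc (0:ℝ) 2) volume := by
    apply Integrable.mono' (integrable_const ((1 + c * Real.sqrt ((al D)^2 + 1))/D)) hGmeas
    rw [ae_restrict_iff' measurableSet_Icc]
    exact ae_of_all _ (fun t ht => by rw [Real.norm_eq_abs]; exact hGbound t ht)
  have hGii : ∀ a b : ℝ, a ∈ Icc (0:ℝ) 2 → b ∈ Icc (0:ℝ) 2 →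
      IntervalIntegrable G volume a b := by
    intro a b ha hb
    rw [intervalIntegrable_iff]
    apply hGint.mono_set
    intro t ht
    exact ⟨le_trans (le_min ha.1 hb.1) ht.1.le, le_trans ht.2 (max_le ha.2 hb.2)⟩
  have hSlimCont : ContinuousOn Slim (Icc (0:ℝ) 2) := by
    have hprim : ContinuousOn (fun x => ∫ t in (0:ℝ)..x, G t) (Icc (0:ℝ) 2) := by
      have := intervalIntegral.continuousOn_primitive_interval
        (a := (0:ℝ)) (b := 2) (μ := volume) (f := G) ?_
      · rwa [uIcc_of_le (by norm_num : (0:ℝ) ≤ 2)] at this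
      · rw [uIcc_of_le (by norm_num : (0:ℝ) ≤ 2)]
        exact hGint
    exact hprim.congr (fun x hx => hSlimInt x hx)
  have hGcont : ContinuousOn G (Icc (0:ℝ) 2) := vf_contOn hD hSlimCont
  have hSd : ∀ x ∈ Ioo (0:ℝ) 2, HasDerivAt Slim (G x) x := by
    intro x hx
    have hIcc_nhds : Icc (0:ℝ) 2 ∈ 𝓝 x := Icc_mem_nhds hx.1 hx.2
    have hprim : HasDerivAt (fun y => ∫ t in (0:ℝ)..y, G t) (G x) x := by
      apply intervalIntegral.integral_hasDerivAt_right
        (hGii 0 x ⟨le_rfl, by norm_num⟩ (Ioo_subset_Icc_self hx))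
      · exact ⟨Icc 0 2, hIcc_nhds, hGmeas⟩
      · exact hGcont.continuousAt hIcc_nhds
    exact hprim.congr_of_eventuallyEq
      (Filter.eventuallyEq_of_mem hIcc_nhds (fun y hy => hSlimInt y hy))
  -- lower bound for the limit
  have hlbcont : Continuous (lb D c) := by
    unfold lb F
    fun_prop
  have hlble : ∀ x ∈ Icc (0:ℝ) 2, lb D c x ≤ Slim x := by
    have hcr := no_upcross (u := fun x => lb D c x - Slim x)
      (hlbcont.continuousOn.sub hSlimCont)
      (by show lb D c 0 - Slim 0 ≤ 0; rw [lb_zero, hSlim0]; norm_num)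
      ?_
    · intro x hx
      have h2 : lb D c x - Slim x ≤ 0 := hcr x hx
      linarith
    · intro x hx hpos
      have hpos' : 0 < lb D c x - Slim x := hpos
      refine ⟨(th D c)^2 * F x * (1 - 2*x + 3*x^2/4) - G x, ?_,
        (lb_hasDerivAt x).sub (hSd x hx)⟩
      have hlbx : Slim x < lb D c x := by linarith [hpos']
      have hlb0 : 0 ≤ lb D c x := lb_nonneg x
      have hFx := F_pos hx.1 hx.2
      have hθ := th_pos hD hc
      have hsq : Real.sqrt (2 * max (Slim x) 0 + 0^2) ≤ th D c * F x := by
        rw [show (2 : ℝ) * max (Slim x) 0 + 0^2 = 2 * max (Slim x) 0 by norm_num,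
          ← sqrt_lb hD hc hx.1.le hx.2.le]
        apply Real.sqrt_le_sqrt
        have : max (Slim x) 0 ≤ lb D c x := max_le hlbx.le hlb0
        unfold lb at this ⊢
        linarith
      have hGc : (F x - c * (th D c * F x))/D ≤ G x := by
        rw [hG_def]
        show (F x - c * (th D c * F x))/D ≤ vf D c 0 x (Slim x)
        unfold vf
        apply (div_le_div_iff_of_pos_right hD).mpr
        have := mul_le_mul_of_nonneg_left hsq hc0.le
        linarith
      have hkey : (F x - c * (th D c * F x))/D = (th D c)^2 * F x := by
        have hte := th_eq (c := c) hD
        rw [div_eq_iff hD.ne']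
        linear_combination (-(F x)) * hte
      have h5 : (th D c)^2 * F x * (1 - 2*x + 3*x^2/4) - (th D c)^2 * F x < 0 := by
        have h6 : (1 - 2*x + 3*x^2/4) - 1 < 0 := by nlinarith [hx.1, hx.2]
        have h7 : 0 < (th D c)^2 * F x := by positivity
        nlinarith
      linarith [hGc, hkey.symm.le]
  -- assemble
  refine ⟨Slim, hSlimCont, fun x hx => ⟨hlble x hx, hSlim_ub x hx⟩, ?_⟩
  intro x hx
  have h := hSd x hx
  have hpos0 : 0 ≤ Slim x := le_trans (lb_nonneg x) (hlble x (Ioo_subset_Icc_self hx))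
  have hGx : G x = (F x - c * Real.sqrt (2 * Slim x))/D := by
    rw [hG_def]
    show vf D c 0 x (Slim x) = _
    unfold vf
    rw [max_eq_left hpos0]
    norm_num
  rwa [hGx] at h

end Limit

section Assemble
variable {D c : ℝ}

set_option maxHeartbeats 1600000 in
lemma het_exists (hD : 0 < D) (hc : Real.sqrt D ≤ c) :
    ∃ γ : ℝ → ℝ × ℝ,
      (∀ z : ℝ,
        HasDerivAt (fun z' => (γ z').1) ((γ z).2) z ∧
        HasDerivAt (fun z' => (γ z').2)
          ((c * (γ z).2 + (γ z).1 - ((γ z).1 ^ 2 - (γ z).1 ^ 3 / 4)) / D) z) ∧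
      (∃ z₁ z₂ : ℝ, γ z₁ ≠ γ z₂) ∧
      Tendsto γ atBot (𝓝 (2, 0)) ∧ Tendsto γ atTop (𝓝 (0, 0)) := by
  obtain ⟨S, hScont, hSbd, hSd⟩ := S_exists hD hc
  have hal := al_pos hD
  have hθ := th_pos hD hc
  have hc0 := c_pos hD hc
  have hSpos : ∀ x ∈ Ioo (0:ℝ) 2, 0 < S x := by
    intro x hx
    have h1 := (hSbd x (Ioo_subset_Icc_self hx)).1
    have h2 := F_pos hx.1 hx.2
    have h3 : 0 < lb D c x := by unfold lb; positivity
    linarith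
  set V : ℝ → ℝ := fun x => -Real.sqrt (2 * S x) with hV_def
  have hVneg : ∀ x ∈ Ioo (0:ℝ) 2, V x < 0 := by
    intro x hx
    have := hSpos x hx
    simp only [hV_def, neg_neg, neg_lt, neg_zero]
    exact Real.sqrt_pos.mpr (by linarith)
  -- bounds on |V|
  have hVub : ∀ x ∈ Ioo (0:ℝ) 2, Real.sqrt (2 * S x) ≤ al D * x * (2-x) := by
    intro x hx
    rw [← sqrt_ub hD hx.1.le hx.2.le]
    apply Real.sqrt_le_sqrt
    have := (hSbd x (Ioo_subset_Icc_self hx)).2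
    linarith
  have hVlb : ∀ x ∈ Ioo (0:ℝ) 2, th D c * F x ≤ Real.sqrt (2 * S x) := by
    intro x hx
    rw [← sqrt_lb hD hc hx.1.le hx.2.le]
    apply Real.sqrt_le_sqrt
    have := (hSbd x (Ioo_subset_Icc_self hx)).1
    unfold lb at this ⊢
    linarith
  have hVcont : ContinuousOn V (Ioo 0 2) := by
    apply ContinuousOn.neg
    apply Real.continuous_sqrt.comp_continuousOn
    exact continuousOn_const.mul (hScont.mono Ioo_subset_Icc_self)
  have hVinv_cont : ContinuousOn (fun t => (V t)⁻¹) (Ioo 0 2) :=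
    hVcont.inv₀ (fun t ht => (hVneg t ht).ne)
  -- the time coordinate
  set Z : ℝ → ℝ := fun x => ∫ t in (1:ℝ)..x, (V t)⁻¹ with hZ_def
  have h1mem : (1:ℝ) ∈ Ioo (0:ℝ) 2 := by norm_num
  have hZii : ∀ a b : ℝ, a ∈ Ioo (0:ℝ) 2 → b ∈ Ioo (0:ℝ) 2 →
      IntervalIntegrable (fun t => (V t)⁻¹) volume a b := by
    intro a b ha hb
    apply ContinuousOn.intervalIntegrable
    apply hVinv_cont.mono
    intro t ht
    rcases ht with ⟨h1, h2⟩
    constructor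
    · exact lt_of_lt_of_le (lt_min ha.1 hb.1) (by simpa using h1)
    · exact lt_of_le_of_lt (by simpa using h2) (max_lt ha.2 hb.2)
  have hZd : ∀ x ∈ Ioo (0:ℝ) 2, HasDerivAt Z ((V x)⁻¹) x := by
    intro x hx
    apply intervalIntegral.integral_hasDerivAt_right (hZii 1 x h1mem hx)
      ⟨Ioo 0 2, Ioo_mem_nhds hx.1 hx.2, hVinv_cont.aestronglyMeasurable measurableSet_Ioo⟩
    exact hVinv_cont.continuousAt (Ioo_mem_nhds hx.1 hx.2)
  have hZcont : ContinuousOn Z (Ioo 0 2) := fun x hx =>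
    (hZd x hx).continuousAt.continuousWithinAt
  have hZanti : StrictAntiOn Z (Ioo 0 2) := by
    apply strictAntiOn_of_deriv_neg (convex_Ioo 0 2) hZcont
    intro x hx
    rw [interior_Ioo] at hx
    rw [(hZd x hx).deriv]
    exact inv_lt_zero.mpr (hVneg x hx)
  have hZ1 : Z 1 = 0 := intervalIntegral.integral_same
  -- lower estimate of Z near 0
  have hZlow : ∀ x ∈ Ioo (0:ℝ) 2, x ≤ 1 → -(Real.log x) / (2 * al D) ≤ Z x := by
    intro x hx hx1
    have hx0 := hx.1
    have hIcc : Icc x 1 ⊆ Ioo (0:ℝ) 2 := fun t ht => ⟨lt_of_lt_of_le hx0 ht.1,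
      lt_of_le_of_lt ht.2 (by norm_num)⟩
    have hint1 : IntervalIntegrable (fun t => -(V t)⁻¹) volume x 1 := by
      apply ContinuousOn.intervalIntegrable
      apply ContinuousOn.neg
      apply hVinv_cont.mono
      rw [uIcc_of_le hx1]
      exact hIcc
    have hint2 : IntervalIntegrable (fun t => (2 * al D * t)⁻¹) volume x 1 := by
      apply ContinuousOn.intervalIntegrable
      apply ContinuousOn.inv₀
      · fun_prop
      · intro t ht
        rw [uIcc_of_le hx1] at ht
        have := lt_of_lt_of_le hx0 ht.1
        positivity
    have hmono : ∀ t ∈ Icc x 1, (2 * al D * t)⁻¹ ≤ -(V t)⁻¹ := by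
      intro t ht
      have htm := hIcc ht
      have h1 : -(V t)⁻¹ = (Real.sqrt (2 * S t))⁻¹ := by
        simp only [hV_def]
        rw [← inv_neg, neg_neg]
      rw [h1]
      have hsp : 0 < Real.sqrt (2 * S t) := Real.sqrt_pos.mpr (by linarith [hSpos t htm])
      apply inv_anti₀ hsp
      have h2 := hVub t htm
      nlinarith [htm.1, htm.2, hal]
    have hZx : Z x = ∫ t in x..1, -(V t)⁻¹ := by
      show (∫ t in (1:ℝ)..x, (V t)⁻¹) = _
      rw [intervalIntegral.integral_symm x 1, ← intervalIntegral.integral_neg]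
    have hcmp : (∫ t in x..1, (2 * al D * t)⁻¹) ≤ ∫ t in x..1, -(V t)⁻¹ :=
      intervalIntegral.integral_mono_on hx1 hint2 hint1 hmono
    have hIcalc : (∫ t in x..1, (2 * al D * t)⁻¹) = -(Real.log x) / (2 * al D) := by
      have heq : ∀ t ∈ uIcc x 1, (2 * al D * t)⁻¹ = (2 * al D)⁻¹ * t⁻¹ := by
        intro t _
        rw [mul_inv]
      rw [integral_congr heq, intervalIntegral.integral_const_mul,
        integral_inv (by
          rw [uIcc_of_le hx1]
          intro h0
          exact absurd h0.1 (not_le.mpr hx0)),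
        one_div, Real.log_inv]
      field_simp
    rw [hZx, ← hIcalc]
    exact hcmp
  -- upper estimate of Z near 2
  have hZhigh : ∀ x ∈ Ioo (0:ℝ) 2, 1 ≤ x → Z x ≤ Real.log (2 - x) / (2 * al D) := by
    intro x hx hx1
    have hx2 := hx.2
    have hIcc : Icc 1 x ⊆ Ioo (0:ℝ) 2 := fun t ht => ⟨lt_of_lt_of_le (by norm_num) ht.1,
      lt_of_le_of_lt ht.2 hx2⟩
    have hint1 : IntervalIntegrable (fun t => (V t)⁻¹) volume 1 x := hZii 1 x h1mem hx
    have hint2 : IntervalIntegrable (fun t => -(2 * al D * (2 - t))⁻¹) volume 1 x := by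
      apply ContinuousOn.intervalIntegrable
      apply ContinuousOn.neg
      apply ContinuousOn.inv₀
      · fun_prop
      · intro t ht
        rw [uIcc_of_le hx1] at ht
        have := lt_of_le_of_lt ht.2 hx2
        have h2t : 0 < 2 - t := by linarith
        positivity
    have hmono : ∀ t ∈ Icc 1 x, (V t)⁻¹ ≤ -(2 * al D * (2 - t))⁻¹ := by
      intro t ht
      have htm := hIcc ht
      have h1 : (V t)⁻¹ = -(Real.sqrt (2 * S t))⁻¹ := by
        simp only [hV_def]
        rw [inv_neg]
      rw [h1, neg_le_neg_iff]
      have hsp : 0 < Real.sqrt (2 * S t) := Real.sqrt_pos.mpr (by linarith [hSpos t htm])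
      apply inv_anti₀ hsp
      have h2 := hVub t htm
      nlinarith [htm.1, htm.2, hal]
    have hcmp : Z x ≤ ∫ t in (1:ℝ)..x, -(2 * al D * (2 - t))⁻¹ :=
      intervalIntegral.integral_mono_on hx1 hint1 hint2 hmono
    have hIcalc : (∫ t in (1:ℝ)..x, -(2 * al D * (2 - t))⁻¹)
        = Real.log (2 - x) / (2 * al D) := by
      have heq : ∀ t ∈ uIcc (1:ℝ) x, -(2 * al D * (2 - t))⁻¹
          = (-(2 * al D)⁻¹) * (2 - t)⁻¹ := by
        intro t _
        rw [mul_inv]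
        ring
      rw [integral_congr heq, intervalIntegral.integral_const_mul]
      have hsub : (∫ t in (1:ℝ)..x, (2 - t)⁻¹) = ∫ u in (2-x)..(2-1:ℝ), u⁻¹ :=
        intervalIntegral.integral_comp_sub_left (fun u => u⁻¹) 2
      rw [hsub, integral_inv (Set.notMem_uIcc_of_lt (by linarith) (by norm_num))]
      have h2x : (0:ℝ) < 2 - x := by linarith
      rw [show ((2:ℝ)-1) = 1 by norm_num, Real.log_div one_ne_zero (ne_of_gt h2x)]
      rw [Real.log_one]
      field_simp
      ring
    rw [hIcalc] at hcmp
    exact hcmp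
  -- hitting lemmas: Z is unbounded in both directions
  have hhit_low : ∀ z : ℝ, ∃ a, a ∈ Ioo (0:ℝ) 2 ∧ a ≤ 1 ∧ z < Z a := by
    intro z
    set a : ℝ := min (Real.exp (-(2 * al D) * (|z|+1))) 2⁻¹ with ha_def
    have ha0 : 0 < a := lt_min (Real.exp_pos _) (by norm_num)
    have ha1 : a ≤ 2⁻¹ := min_le_right _ _
    have hamem : a ∈ Ioo (0:ℝ) 2 := ⟨ha0, by nlinarith⟩
    refine ⟨a, hamem, by nlinarith, ?_⟩
    have hlg : Real.log a ≤ -(2 * al D) * (|z|+1) := by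
      calc Real.log a ≤ Real.log (Real.exp (-(2 * al D) * (|z|+1))) :=
        Real.log_le_log ha0 (min_le_left _ _)
      _ = -(2 * al D) * (|z|+1) := Real.log_exp _
    have h1 : |z| + 1 ≤ -(Real.log a) / (2 * al D) := by
      rw [le_div_iff₀ (by positivity)]
      nlinarith
    have h2 := hZlow a hamem (by nlinarith)
    have := abs_nonneg z
    have := le_abs_self z
    linarith
  have hhit_high : ∀ z : ℝ, ∃ b, b ∈ Ioo (0:ℝ) 2 ∧ 1 ≤ b ∧ Z b < z := by
    intro z
    set m : ℝ := min (Real.exp ((2 * al D) * (-(|z|+1)))) 2⁻¹ with hm_def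
    have hm0 : 0 < m := lt_min (Real.exp_pos _) (by norm_num)
    have hm1 : m ≤ 2⁻¹ := min_le_right _ _
    set b : ℝ := 2 - m with hb_def
    have hbmem : b ∈ Ioo (0:ℝ) 2 := ⟨by nlinarith, by nlinarith⟩
    refine ⟨b, hbmem, by nlinarith, ?_⟩
    have hlg : Real.log m ≤ (2 * al D) * (-(|z|+1)) := by
      calc Real.log m ≤ Real.log (Real.exp ((2 * al D) * (-(|z|+1)))) :=
        Real.log_le_log hm0 (min_le_left _ _)
      _ = (2 * al D) * (-(|z|+1)) := Real.log_exp _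
    have h1 : Real.log m / (2 * al D) ≤ -(|z|+1) := by
      rw [div_le_iff₀ (by positivity)]
      nlinarith
    have h2 := hZhigh b hbmem (by nlinarith)
    have h3 : (2:ℝ) - b = m := by rw [hb_def]; ring
    rw [h3] at h2
    have := abs_nonneg z
    have := neg_abs_le z
    linarith
  -- the inverse function E
  have hEexists : ∀ z : ℝ, ∃ x, (x ∈ Ioo (0:ℝ) 2 ∧ Z x = z) ∧
      ∀ y, (y ∈ Ioo (0:ℝ) 2 ∧ Z y = z) → y = x := by
    intro z
    obtain ⟨a, hamem, ha1, hZa⟩ := hhit_low z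
    obtain ⟨b, hbmem, hb1, hZb⟩ := hhit_high z
    have hab : a ≤ b := le_trans ha1 hb1
    have hsub : Icc a b ⊆ Ioo (0:ℝ) 2 := fun t ht =>
      ⟨lt_of_lt_of_le hamem.1 ht.1, lt_of_le_of_lt ht.2 hbmem.2⟩
    have hivt := intermediate_value_Ioo' hab (hZcont.mono hsub)
    have hz : z ∈ Ioo (Z b) (Z a) := ⟨hZb, hZa⟩
    obtain ⟨x, hxab, hZx⟩ := hivt hz
    have hxmem : x ∈ Ioo (0:ℝ) 2 := hsub (Ioo_subset_Icc_self hxab)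
    refine ⟨x, ⟨hxmem, hZx⟩, ?_⟩
    intro y hy
    exact hZanti.injOn hy.1 hxmem (hy.2.trans hZx.symm)
  choose E hE1 hE2 using hEexists
  have hEmem : ∀ z, E z ∈ Ioo (0:ℝ) 2 := fun z => (hE1 z).1
  have hEZ : ∀ z, Z (E z) = z := fun z => (hE1 z).2
  -- monotone comparison facts
  have hElt : ∀ z a, a ∈ Ioo (0:ℝ) 2 → Z a < z → E z < a := by
    intro z a ha hZa
    by_contra h
    push_neg at h
    rcases eq_or_lt_of_le h with heq | hlt
    · rw [heq] at hZa
      rw [hEZ z] at hZa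
      exact lt_irrefl z hZa
    · have := hZanti ha (hEmem z) hlt
      rw [hEZ z] at this
      linarith
  have hEgt : ∀ z b, b ∈ Ioo (0:ℝ) 2 → z < Z b → b < E z := by
    intro z b hb hZb
    by_contra h
    push_neg at h
    rcases eq_or_lt_of_le h with heq | hlt
    · rw [← heq] at hZb
      rw [hEZ z] at hZb
      exact lt_irrefl z hZb
    · have := hZanti (hEmem z) hb hlt
      rw [hEZ z] at this
      linarith
  -- continuity of E
  have hEcont : ∀ z, ContinuousAt E z := by
    intro z
    rw [Metric.continuousAt_iff]
    intro ε hε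
    set x := E z with hx_def
    have hx := hEmem z
    set a : ℝ := max (x - ε/2) (x/2) with ha_def
    set b : ℝ := min (x + ε/2) ((x+2)/2) with hb_def
    have hamem : a ∈ Ioo (0:ℝ) 2 := by
      constructor
      · have : x/2 ≤ a := le_max_right _ _
        linarith [hx.1]
      · have h1 : a ≤ x := by
          apply max_le
          · linarith
          · linarith [hx.1]
        linarith [hx.2]
    have hbmem : b ∈ Ioo (0:ℝ) 2 := by
      constructor
      · have h1 : x ≤ b := by
          apply le_min
          · linarith
          · linarith [hx.2]
        linarith [hx.1]
      · have : b ≤ (x+2)/2 := min_le_right _ _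
        linarith [hx.2]
    have halt : a < x := by
      apply max_lt
      · linarith
      · linarith [hx.1]
    have hblt : x < b := by
      apply lt_min
      · linarith
      · linarith [hx.2]
    have hZba : Z b < z ∧ z < Z a := by
      constructor
      · have := hZanti hx hbmem hblt
        rw [hEZ z] at this
        exact this
      · have := hZanti hamem hx halt
        rw [hEZ z] at this
        exact this
    refine ⟨min (z - Z b) (Z a - z), by
      apply lt_min <;> linarith [hZba.1, hZba.2], ?_⟩
    intro z' hz'
    rw [Real.dist_eq] at hz'
    have habs := abs_lt.mp hz'
    have hmin1 : min (z - Z b) (Z a - z) ≤ z - Z b := min_le_left _ _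
    have hmin2 : min (z - Z b) (Z a - z) ≤ Z a - z := min_le_right _ _
    have h1 : Z b < z' := by linarith [habs.1]
    have h2 : z' < Z a := by linarith [habs.2]
    have hlt1 : E z' < b := hElt z' b hbmem h1
    have hlt2 : a < E z' := hEgt z' a hamem h2
    rw [Real.dist_eq, abs_lt]
    constructor
    · have : x - ε/2 ≤ a := le_max_left _ _
      linarith
    · have : b ≤ x + ε/2 := min_le_left _ _
      linarith
  -- derivative of E
  have hEd : ∀ z, HasDerivAt E (V (E z)) z := by
    intro z
    have h := HasDerivAt.of_local_left_inverse (hEcont z) (hZd (E z) (hEmem z))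
      (inv_ne_zero (hVneg (E z) (hEmem z)).ne)
      (Filter.Eventually.of_forall hEZ)
    rwa [inv_inv] at h
  -- derivative of V
  have hVd : ∀ x ∈ Ioo (0:ℝ) 2, HasDerivAt V
      (-(1 / (2 * Real.sqrt (2 * S x)) * (2 * ((F x - c * Real.sqrt (2 * S x)) / D)))) x := by
    intro x hx
    have h2S : (0:ℝ) < 2 * S x := by linarith [hSpos x hx]
    have h1 : HasDerivAt (fun y => 2 * S y) (2 * ((F x - c * Real.sqrt (2 * S x)) / D)) x :=
      (hSd x hx).const_mul 2
    have h2 := (Real.hasDerivAt_sqrt h2S.ne').comp x h1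
    exact h2.neg
  -- assemble γ
  refine ⟨fun z => (E z, V (E z)), ?_, ?_, ?_, ?_⟩
  · intro z
    constructor
    · exact hEd z
    · have hx := hEmem z
      have h2S : (0:ℝ) < 2 * S (E z) := by linarith [hSpos (E z) hx]
      have hsq : (0:ℝ) < Real.sqrt (2 * S (E z)) := Real.sqrt_pos.mpr h2S
      have hchain := (hVd (E z) hx).comp z (hEd z)
      have hval : (-(1 / (2 * Real.sqrt (2 * S (E z)))
            * (2 * ((F (E z) - c * Real.sqrt (2 * S (E z))) / D)))) * V (E z)
          = (c * V (E z) + E z - ((E z)^2 - (E z)^3/4)) / D := by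
        show (-(1 / (2 * Real.sqrt (2 * S (E z)))
            * (2 * ((F (E z) - c * Real.sqrt (2 * S (E z))) / D)))) * (-Real.sqrt (2 * S (E z)))
          = (c * (-Real.sqrt (2 * S (E z))) + E z - ((E z)^2 - (E z)^3/4)) / D
        have key : ∀ s : ℝ, s ≠ 0 →
            (-(1 / (2 * s) * (2 * ((F (E z) - c * s) / D)))) * (-s)
            = (c * (-s) + E z - ((E z)^2 - (E z)^3/4)) / D := by
          intro s hs
          unfold F
          field_simp
          ring
        exact key _ hsq.ne'
      rw [hval] at hchain
      exact hchain
  · refine ⟨0, 1, ?_⟩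
    intro hcontra
    have h1 : E 0 = E 1 := congrArg Prod.fst hcontra
    have h2 : (0:ℝ) = 1 := by
      calc (0:ℝ) = Z (E 0) := (hEZ 0).symm
      _ = Z (E 1) := by rw [h1]
      _ = 1 := hEZ 1
    norm_num at h2
  · -- limit at -∞ : (2, 0)
    have hE2 : Tendsto E atBot (𝓝 2) := by
      rw [tendsto_order]
      constructor
      · intro l hl
        obtain ⟨b, hbmem, hb1, -⟩ := hhit_high 0
        rcases le_or_gt l 0 with hl0 | hl0
        · exact Filter.Eventually.of_forall (fun z => lt_of_le_of_lt hl0 (hEmem z).1)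
        · set b' : ℝ := max 1 ((l + 2)/2) with hb'_def
          have hb'mem : b' ∈ Ioo (0:ℝ) 2 := by
            constructor
            · have := le_max_left 1 ((l+2)/2)
              linarith
            · apply max_lt (by norm_num)
              linarith
          have hb'l : l ≤ b' := by
            have := le_max_right 1 ((l+2)/2)
            linarith
          filter_upwards [eventually_lt_atBot (Z b')] with z hz
          exact lt_of_le_of_lt hb'l (hEgt z b' hb'mem hz)
      · intro u hu
        exact Filter.Eventually.of_forall (fun z => lt_trans (hEmem z).2 hu)
    have hV2 : Tendsto (fun z => V (E z)) atBot (𝓝 0) := by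
      apply squeeze_zero_norm' _ ?_
      · exact fun z => 2 * al D * (2 - E z)
      · filter_upwards with z
        have hx := hEmem z
        rw [Real.norm_eq_abs]
        have h1 : |V (E z)| = Real.sqrt (2 * S (E z)) := by
          simp only [hV_def, abs_neg]
          exact abs_of_nonneg (Real.sqrt_nonneg _)
        rw [h1]
        have h2 := hVub (E z) hx
        have h2e : (0:ℝ) ≤ 2 - E z := by linarith [hx.2]
        nlinarith [mul_nonneg (mul_nonneg hal.le h2e) h2e]
      · have : Tendsto (fun z => 2 - E z) atBot (𝓝 0) := by
          have := hE2.const_sub 2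
          simpa using this
        have h3 := this.const_mul (2 * al D)
        simpa using h3
    have : Tendsto (fun z => (E z, V (E z))) atBot (𝓝 (2, 0)) :=
      hE2.prodMk_nhds hV2
    exact this
  · -- limit at +∞ : (0, 0)
    have hE0 : Tendsto E atTop (𝓝 0) := by
      rw [tendsto_order]
      constructor
      · intro l hl
        exact Filter.Eventually.of_forall (fun z => lt_trans hl (hEmem z).1)
      · intro u hu
        set a : ℝ := min (u/2) 1 with ha_def
        have hamem : a ∈ Ioo (0:ℝ) 2 := by
          constructor
          · apply lt_min (by linarith) (by norm_num)
          · apply lt_of_le_of_lt (min_le_right _ _) (by norm_num)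
        have hau : a < u := by
          apply lt_of_le_of_lt (min_le_left _ _)
          linarith
        filter_upwards [eventually_gt_atTop (Z a)] with z hz
        exact lt_trans (hElt z a hamem hz) hau
    have hV0 : Tendsto (fun z => V (E z)) atTop (𝓝 0) := by
      apply squeeze_zero_norm' _ ?_
      · exact fun z => 2 * al D * E z
      · filter_upwards with z
        have hx := hEmem z
        rw [Real.norm_eq_abs]
        have h1 : |V (E z)| = Real.sqrt (2 * S (E z)) := by
          simp only [hV_def, abs_neg]
          exact abs_of_nonneg (Real.sqrt_nonneg _)
        rw [h1]
        have h2 := hVub (E z) hx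
        have he : (0:ℝ) ≤ E z := hx.1.le
        nlinarith [mul_nonneg (mul_nonneg hal.le he) he]
      · have h3 := hE0.const_mul (2 * al D)
        simpa using h3
    exact hE0.prodMk_nhds hV0

end Assemble

end KarmaHet

end KarmaAux

/-- For the travelling-wave fast subsystem at `n = 1` (`a = 1/2`):
`E' = w`, `D w' = c w + E - (E² - E³/4)`. There exists `c_min > 0` such that
for every `c ≥ c_min` there is a nonconstant heteroclinic solution from the
degenerate point `(2,0)` to the origin `(0,0)`. -/
theorem karma_heteroclinic_large_speed (D : ℝ) (hD : 0 < D) :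
    ∃ cmin : ℝ, 0 < cmin ∧ ∀ c : ℝ, cmin ≤ c →
      ∃ γ : ℝ → ℝ × ℝ,
        (∀ z : ℝ,
          HasDerivAt (fun z' => (γ z').1) ((γ z).2) z ∧
          HasDerivAt (fun z' => (γ z').2)
            ((c * (γ z).2 + (γ z).1 - ((γ z).1 ^ 2 - (γ z).1 ^ 3 / 4)) / D) z) ∧
        (∃ z₁ z₂ : ℝ, γ z₁ ≠ γ z₂) ∧
        Tendsto γ atBot (𝓝 (2, 0)) ∧ Tendsto γ atTop (𝓝 (0, 0)) := by
  refine ⟨Real.sqrt D, Real.sqrt_pos.mpr hD, ?_⟩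
  intro c hc
  exact KarmaHet.het_exists hD hc
end
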